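/- arXiv:1202.1213 — 10 statements merged into one kernel-verified Lean document; each statement's English description precedes it below -/
import Mathlib

section
/- Let α be a finite type and let g be a positive definite complex matrix indexed by α × α. Let X and Y be finite subsets of α with X ∪ Y = α. For a subset S ⊆ α let g_S denote the principal submatrix of g with rows and columns indexed by S, with the convention det(g_∅) = 1. Then det(g_{X∪Y}) · det(g_{X∩Y}) ≤ det(g_X) · det(g_Y). -/
open Matrix
open scoped ComplexOrder

/-- The principal submatrix of `g` with rows and columns indexed by the finite set `S`. -/
def principalSubmatrix {α : Type*} (g : Matrix α α ℂ) (S : Finset α) :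
    Matrix {a // a ∈ S} {a // a ∈ S} ℂ :=
  Matrix.of fun i j => g i.1 j.1

/-!
Eliminate the block indexed by `Z = X ∩ Y` by its Schur complement `S`, a positive definite
matrix indexed by `(X \ Y) ∪ (Y \ X)`. The Schur complements of `Z` inside `g_X` and `g_Y` are
the two diagonal blocks of `S`, so `det g_{X ∪ Y} = det g_Z * det S`,
`det g_X = det g_Z * det S_{X \ Y}` and `det g_Y = det g_Z * det S_{Y \ X}`, and the inequality
becomes Fischer's inequality `det S ≤ det S_{X \ Y} * det S_{Y \ X}`. Fischer's inequality is
again a Schur complement argument, combined with `det A ≤ det (A + B)` for `A` positive definite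
and `B` positive semidefinite, which holds because `det (1 + C) ≥ 1` for `C = A^{-1/2} B A^{-1/2}`.
-/

namespace Matrix

variable {l m n p q 𝕜 R : Type*}

theorem IsHermitian.toBlocks₂₁_eq [Star R] {M : Matrix (m ⊕ n) (m ⊕ n) R}
    (hM : M.IsHermitian) : M.toBlocks₂₁ = M.toBlocks₁₂ᴴ := by
  ext i j
  exact (hM.apply _ _).symm

theorem toBlocks₂₂_submatrix_sumMap_id (M : Matrix (m ⊕ n) (m ⊕ n) R) (f : l → m) :
    (M.submatrix (Sum.map f id) (Sum.map f id)).toBlocks₂₂ = M.toBlocks₂₂ :=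
  rfl

variable [Fintype n] [DecidableEq n]

section CommRing

variable [CommRing R]

noncomputable def schurComplement (M : Matrix (m ⊕ n) (m ⊕ n) R) : Matrix m m R :=
  M.toBlocks₁₁ - M.toBlocks₁₂ * M.toBlocks₂₂⁻¹ * M.toBlocks₂₁

theorem det_eq_det_toBlocks₂₂_mul_det_schurComplement [Fintype m] [DecidableEq m]
    (M : Matrix (m ⊕ n) (m ⊕ n) R) (hM : IsUnit M.toBlocks₂₂.det) :
    M.det = M.toBlocks₂₂.det * M.schurComplement.det := by
  have := invertibleOfIsUnitDet _ hM
  conv_lhs => rw [← fromBlocks_toBlocks M]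
  rw [det_fromBlocks₂₂, invOf_eq_nonsing_inv, schurComplement]

theorem toBlocks₁₁_schurComplement (M : Matrix ((p ⊕ q) ⊕ n) ((p ⊕ q) ⊕ n) R) :
    M.schurComplement.toBlocks₁₁ =
      (M.submatrix (Sum.map Sum.inl id) (Sum.map Sum.inl id)).schurComplement := by
  ext i j
  rfl

theorem toBlocks₂₂_schurComplement (M : Matrix ((p ⊕ q) ⊕ n) ((p ⊕ q) ⊕ n) R) :
    M.schurComplement.toBlocks₂₂ =
      (M.submatrix (Sum.map Sum.inr id) (Sum.map Sum.inr id)).schurComplement := by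
  ext i j
  rfl

end CommRing

section RCLike

variable [RCLike 𝕜]

theorem PosSemidef.one_le_det_one_add {C : Matrix n n 𝕜} (hC : C.PosSemidef) :
    1 ≤ (1 + C).det := by
  set u := hC.1.eigenvectorUnitary
  have hdiag : 1 + C = (u : Matrix n n 𝕜) * diagonal (fun i => 1 + (hC.1.eigenvalues i : 𝕜)) *
      star (u : Matrix n n 𝕜) := by
    conv_lhs => rw [hC.1.spectral_theorem, ← map_one (Unitary.conjStarAlgAut 𝕜 _ u), ← map_add]
    rw [Unitary.conjStarAlgAut_apply, ← diagonal_one, diagonal_add]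
    rfl
  rw [hdiag, det_mul, det_mul, mul_right_comm, ← det_mul, Unitary.mul_star_self_of_mem u.2,
    det_one, one_mul, det_diagonal]
  calc (1 : 𝕜) = ∏ _i : n, 1 := Finset.prod_const_one.symm
    _ ≤ _ := Finset.prod_le_prod (fun _ _ => zero_le_one) fun i _ =>
      le_add_of_nonneg_right (RCLike.ofReal_nonneg.mpr (hC.eigenvalues_nonneg i))

open scoped MatrixOrder in
theorem PosDef.det_le_det_add {A B : Matrix n n 𝕜} (hA : A.PosDef) (hB : B.PosSemidef) :
    A.det ≤ (A + B).det := by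
  set T := CFC.sqrt A
  have hTT : T * T = A := CFC.sqrt_mul_sqrt_self A hA.posSemidef.nonneg
  have hT : T.IsHermitian := (CFC.sqrt_nonneg A).posSemidef.1
  have hTu : IsUnit T.det := (isUnit_iff_isUnit_det T).mp hA.isStrictlyPositive.sqrt.isUnit
  have hC : (T⁻¹ * B * T⁻¹).PosSemidef := by
    simpa [conjTranspose_nonsing_inv, hT.eq] using hB.conjTranspose_mul_mul_same T⁻¹
  have hsum : A + B = T * (1 + T⁻¹ * B * T⁻¹) * T := by
    rw [mul_add, add_mul, mul_one, hTT, ← mul_assoc, ← mul_assoc, mul_nonsing_inv _ hTu, one_mul,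
      mul_assoc, nonsing_inv_mul _ hTu, mul_one]
  calc A.det = A.det * 1 := (mul_one _).symm
    _ ≤ A.det * (1 + T⁻¹ * B * T⁻¹).det :=
      mul_le_mul_of_nonneg_left hC.one_le_det_one_add hA.det_pos.le
    _ = (A + B).det := by rw [hsum, ← hTT, det_mul, det_mul, det_mul]; ring

variable [Fintype m] [DecidableEq m]

theorem PosDef.schurComplement {M : Matrix (m ⊕ n) (m ⊕ n) 𝕜} (hM : M.PosDef) :
    M.schurComplement.PosDef := by
  have hD : M.toBlocks₂₂.PosDef := hM.submatrix Sum.inr_injective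
  have := invertibleOfIsUnitDet _ hD.det_pos.ne'.isUnit
  have hpsd : M.schurComplement.PosSemidef := by
    rw [Matrix.schurComplement, hM.1.toBlocks₂₁_eq]
    refine (PosDef.fromBlocks₂₂ _ _ hD).mp ?_
    rw [← hM.1.toBlocks₂₁_eq, fromBlocks_toBlocks]
    exact hM.posSemidef
  refine hpsd.posDef_iff_det_ne_zero.mpr fun h => hM.det_pos.ne' ?_
  rw [det_eq_det_toBlocks₂₂_mul_det_schurComplement M hD.det_pos.ne'.isUnit, h, mul_zero]

theorem PosDef.det_le_det_toBlocks₁₁_mul_det_toBlocks₂₂ {M : Matrix (m ⊕ n) (m ⊕ n) 𝕜}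
    (hM : M.PosDef) : M.det ≤ M.toBlocks₁₁.det * M.toBlocks₂₂.det := by
  have hD : M.toBlocks₂₂.PosDef := hM.submatrix Sum.inr_injective
  have hK : (M.toBlocks₁₂ * M.toBlocks₂₂⁻¹ * M.toBlocks₂₁).PosSemidef := by
    rw [hM.1.toBlocks₂₁_eq]
    exact hD.inv.posSemidef.mul_mul_conjTranspose_same _
  have hle : M.schurComplement.det ≤ M.toBlocks₁₁.det := by
    simpa [Matrix.schurComplement] using hM.schurComplement.det_le_det_add hK
  rw [det_eq_det_toBlocks₂₂_mul_det_schurComplement M hD.det_pos.ne'.isUnit, mul_comm]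
  exact mul_le_mul_of_nonneg_right hle hD.det_pos.le

theorem PosDef.det_mul_det_toBlocks₂₂_le [Fintype p] [DecidableEq p] [Fintype q] [DecidableEq q]
    {M : Matrix ((p ⊕ q) ⊕ n) ((p ⊕ q) ⊕ n) 𝕜} (hM : M.PosDef) :
    M.det * M.toBlocks₂₂.det ≤
      (M.submatrix (Sum.map Sum.inl id) (Sum.map Sum.inl id)).det *
        (M.submatrix (Sum.map Sum.inr id) (Sum.map Sum.inr id)).det := by
  have hD : M.toBlocks₂₂.PosDef := hM.submatrix Sum.inr_injective
  have hfischer := hM.schurComplement.det_le_det_toBlocks₁₁_mul_det_toBlocks₂₂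
  rw [toBlocks₁₁_schurComplement, toBlocks₂₂_schurComplement] at hfischer
  rw [det_eq_det_toBlocks₂₂_mul_det_schurComplement M hD.det_pos.ne'.isUnit,
    det_eq_det_toBlocks₂₂_mul_det_schurComplement (M.submatrix (Sum.map Sum.inl id)
      (Sum.map Sum.inl id)) hD.det_pos.ne'.isUnit,
    det_eq_det_toBlocks₂₂_mul_det_schurComplement (M.submatrix (Sum.map Sum.inr id)
      (Sum.map Sum.inr id)) hD.det_pos.ne'.isUnit,
    toBlocks₂₂_submatrix_sumMap_id, toBlocks₂₂_submatrix_sumMap_id]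
  calc M.toBlocks₂₂.det * M.schurComplement.det * M.toBlocks₂₂.det
      = (M.toBlocks₂₂.det * M.toBlocks₂₂.det) * M.schurComplement.det := by ring
    _ ≤ (M.toBlocks₂₂.det * M.toBlocks₂₂.det) * (_ * _) :=
      mul_le_mul_of_nonneg_left hfischer (mul_pos hD.det_pos hD.det_pos).le
    _ = _ := by ring

end RCLike

end Matrix

theorem det_principalSubmatrix_union_mul_det_le {α : Type*} [Fintype α] [DecidableEq α]
    {g : Matrix α α ℂ} (hg : g.PosDef) {P Q Z : Finset α}
    (hPQ : Disjoint P Q) (hPZ : Disjoint P Z) (hQZ : Disjoint Q Z) :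
    (principalSubmatrix g (P ∪ Q ∪ Z)).det * (principalSubmatrix g Z).det ≤
      (principalSubmatrix g (P ∪ Z)).det * (principalSubmatrix g (Q ∪ Z)).det := by
  let E := (Equiv.sumCongr (Equiv.Finset.union P Q hPQ) (Equiv.refl Z)).trans
    (Equiv.Finset.union (P ∪ Q) Z (Finset.disjoint_union_left.mpr ⟨hPZ, hQZ⟩))
  have hPQZ : (principalSubmatrix g (P ∪ Q ∪ Z)).PosDef := hg.submatrix Subtype.val_injective
  have hM := (hPQZ.submatrix E.injective).det_mul_det_toBlocks₂₂_le
  have hP : ((principalSubmatrix g (P ∪ Q ∪ Z)).submatrix E E).submatrix (Sum.map Sum.inl id)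
      (Sum.map Sum.inl id) = (principalSubmatrix g (P ∪ Z)).submatrix
        (Equiv.Finset.union P Z hPZ) (Equiv.Finset.union P Z hPZ) := by
    ext (i | i) (j | j) <;> rfl
  have hQ : ((principalSubmatrix g (P ∪ Q ∪ Z)).submatrix E E).submatrix (Sum.map Sum.inr id)
      (Sum.map Sum.inr id) = (principalSubmatrix g (Q ∪ Z)).submatrix
        (Equiv.Finset.union Q Z hQZ) (Equiv.Finset.union Q Z hQZ) := by
    ext (i | i) (j | j) <;> rfl
  rwa [hP, hQ, det_submatrix_equiv_self, det_submatrix_equiv_self, det_submatrix_equiv_self] at hM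

theorem det_principalSubmatrix_union_inter_le_general {α : Type*} [Fintype α] [DecidableEq α]
    (g : Matrix α α ℂ) (hg : g.PosDef) (X Y : Finset α) :
    (principalSubmatrix g (X ∪ Y)).det * (principalSubmatrix g (X ∩ Y)).det ≤
      (principalSubmatrix g X).det * (principalSubmatrix g Y).det := by
  have h := det_principalSubmatrix_union_mul_det_le hg disjoint_sdiff_sdiff
    (Finset.disjoint_sdiff_inter X Y) (Finset.inter_comm X Y ▸ Finset.disjoint_sdiff_inter Y X)
  have hXY : X \ Y ∪ Y \ X ∪ X ∩ Y = X ∪ Y := symmDiff_sup_inf X Y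
  rwa [hXY, Finset.sdiff_union_inter, Finset.inter_comm X Y, Finset.sdiff_union_inter,
    Finset.inter_comm] at h

/-- **Gantmacher–Kreĭn / Koteljanskii inequality.**
For a positive definite complex matrix `g` indexed by a finite type and finite subsets
`X`, `Y` covering the index set, one has
`det g_{X ∪ Y} * det g_{X ∩ Y} ≤ det g_X * det g_Y`,
where `g_S` denotes the principal submatrix indexed by `S` (with `det` of the empty matrix
being `1`). -/
theorem det_principalSubmatrix_union_inter_le {α : Type*} [Fintype α] [DecidableEq α]
    (g : Matrix α α ℂ) (hg : g.PosDef) (X Y : Finset α) (hXY : X ∪ Y = Finset.univ) :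
    (principalSubmatrix g (X ∪ Y)).det * (principalSubmatrix g (X ∩ Y)).det ≤
      (principalSubmatrix g X).det * (principalSubmatrix g Y).det :=
  det_principalSubmatrix_union_inter_le_general g hg X Y
end

section
/- Let Γ be a countable discrete group and let φ be a real-valued function defined on the finite subsets of Γ such that: (1) φ(∅) = 0; (2) φ(Fs) = φ(F) for every nonempty finite F ⊆ Γ and s ∈ Γ; (3) φ(F₁ ∪ F₂) + φ(F₁ ∩ F₂) ≤ φ(F₁) + φ(F₂) for all nonempty finite F₁, F₂ ⊆ Γ. Suppose F, F₁, …, F_m are nonempty finite subsets of Γ and λ₁, …, λ_m ∈ (0,1] are real numbers such that the indicator functions satisfy 1_F = Σ_{j=1}^m λ_j 1_{F_j} pointwise on Γ. Then φ(F) ≤ Σ_{j=1}^m λ_j φ(F_j). -/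
/-!
Submodularity means diminishing marginal returns: adding a point `x ∉ B` to `A ⊆ B` raises `φ`
at least as much as adding it to `B`. Build `F` one point at a time. When `x` is added to `E`,
the increment of `φ(E)` splits, by `Σ_{j : x ∈ F_j} λ_j = 1`, into `λ_j`-weighted copies, each
bounded by the increment of `φ(F_j ∩ E)`. Summing over the points gives
`φ(F) ≤ Σ_j λ_j φ(F_j ∩ F)`, and `F_j ⊆ F` because the `λ_j` are positive.
-/

open Finset

section Submodular

variable {α : Type*} [DecidableEq α] {φ : Finset α → ℝ}

theorem submodular_of_submodular_on_nonempty (h0 : φ ∅ = 0)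
    (hsub : ∀ A B : Finset α, A.Nonempty → B.Nonempty → φ (A ∪ B) + φ (A ∩ B) ≤ φ A + φ B)
    (A B : Finset α) : φ (A ∪ B) + φ (A ∩ B) ≤ φ A + φ B := by
  rcases A.eq_empty_or_nonempty with rfl | hA
  · simp [h0]
  rcases B.eq_empty_or_nonempty with rfl | hB
  · simp [h0]
  exact hsub A B hA hB

theorem marginal_le_marginal_of_subset
    (hsub : ∀ A B : Finset α, φ (A ∪ B) + φ (A ∩ B) ≤ φ A + φ B)
    {A B : Finset α} (hAB : A ⊆ B) {x : α} (hx : x ∉ B) :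
    φ (insert x B) - φ B ≤ φ (insert x A) - φ A := by
  have h := hsub (insert x A) B
  rw [insert_union, union_eq_right.2 hAB, insert_inter_of_notMem hx, inter_eq_left.2 hAB] at h
  linarith

theorem le_sum_mul_inter_of_submodular {ι : Type*} [Fintype ι] (h0 : φ ∅ = 0)
    (hsub : ∀ A B : Finset α, φ (A ∪ B) + φ (A ∩ B) ≤ φ A + φ B)
    (G : ι → Finset α) (w : ι → ℝ) (hw : ∀ j, 0 ≤ w j) (E : Finset α)
    (hcover : ∀ x ∈ E, ∑ j, w j * (if x ∈ G j then 1 else 0) = 1) :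
    φ E ≤ ∑ j, w j * φ (G j ∩ E) := by
  induction E using Finset.induction_on with
  | empty => simp [h0]
  | insert x E hxE ih =>
    have hx := hcover x (mem_insert_self x E)
    have step : ∀ j, w j * (if x ∈ G j then 1 else 0) * (φ (insert x E) - φ E) ≤
        w j * (φ (G j ∩ insert x E) - φ (G j ∩ E)) := by
      intro j
      by_cases hxj : x ∈ G j
      · rw [if_pos hxj, mul_one, inter_insert_of_mem hxj]
        exact mul_le_mul_of_nonneg_left
          (marginal_le_marginal_of_subset hsub inter_subset_right hxE) (hw j)
      · simp [hxj, inter_insert_of_notMem hxj]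
    calc φ (insert x E)
        = φ E + ∑ j, w j * (if x ∈ G j then 1 else 0) * (φ (insert x E) - φ E) := by
          rw [← sum_mul, hx, one_mul, add_sub_cancel]
      _ ≤ ∑ j, w j * φ (G j ∩ E) + ∑ j, w j * (φ (G j ∩ insert x E) - φ (G j ∩ E)) :=
          add_le_add (ih fun y hy => hcover y (mem_insert_of_mem hy))
            (sum_le_sum fun j _ => step j)
      _ = ∑ j, w j * φ (G j ∩ insert x E) := by
          rw [← sum_add_distrib]
          exact sum_congr rfl fun j _ => by ring

end Submodular

theorem subset_of_indicator_eq_sum {α ι : Type*} [DecidableEq α] [Fintype ι] {F : Finset α}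
    {G : ι → Finset α} {w : ι → ℝ} (hw : ∀ j, 0 < w j)
    (hind : ∀ x, (if x ∈ F then (1 : ℝ) else 0) = ∑ j, w j * (if x ∈ G j then 1 else 0))
    (j : ι) : G j ⊆ F := by
  intro x hxj
  by_contra hxF
  have hpos : 0 < ∑ i, w i * (if x ∈ G i then (1 : ℝ) else 0) :=
    sum_pos' (fun i _ => mul_nonneg (hw i).le (by split_ifs <;> norm_num))
      ⟨j, mem_univ j, by simpa [hxj] using hw j⟩
  rw [← hind x, if_neg hxF] at hpos
  exact lt_irrefl 0 hpos

theorem phi_le_of_indicator_combination_general {Γ : Type*} [DecidableEq Γ]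
    (φ : Finset Γ → ℝ)
    (h0 : φ ∅ = 0)
    (hsub : ∀ F₁ F₂ : Finset Γ, F₁.Nonempty → F₂.Nonempty →
      φ (F₁ ∪ F₂) + φ (F₁ ∩ F₂) ≤ φ F₁ + φ F₂)
    (m : ℕ) (F : Finset Γ)
    (Fj : Fin m → Finset Γ)
    (lam : Fin m → ℝ) (hlam : ∀ j, lam j ∈ Set.Ioc (0 : ℝ) 1)
    (hind : ∀ s : Γ, (if s ∈ F then (1 : ℝ) else 0) =
      ∑ j : Fin m, lam j * (if s ∈ Fj j then (1 : ℝ) else 0)) :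
    φ F ≤ ∑ j : Fin m, lam j * φ (Fj j) := by
  have hFjF := subset_of_indicator_eq_sum (fun j => (hlam j).1) hind
  calc φ F ≤ ∑ j, lam j * φ (Fj j ∩ F) :=
        le_sum_mul_inter_of_submodular h0 (submodular_of_submodular_on_nonempty h0 hsub)
          Fj lam (fun j => (hlam j).1.le) F fun x hx => by rw [← hind x, if_pos hx]
    _ = ∑ j, lam j * φ (Fj j) := by simp_rw [inter_eq_left.2 (hFjF _)]

/-- **Convex-combination inequality for strongly subadditive right-invariant set functions.**
Let `Γ` be a countable discrete group and `φ` a real-valued function on finite subsets of `Γ`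
with `φ(∅) = 0`, `φ(Fs) = φ(F)` for nonempty finite `F` and `s ∈ Γ`, and
`φ(F₁ ∪ F₂) + φ(F₁ ∩ F₂) ≤ φ(F₁) + φ(F₂)` for nonempty finite `F₁, F₂`.  If
`1_F = Σ_{j} λ_j 1_{F_j}` pointwise with nonempty finite sets `F, F_j` and `λ_j ∈ (0,1]`,
then `φ(F) ≤ Σ_j λ_j φ(F_j)`. -/
theorem phi_le_of_indicator_combination {Γ : Type*} [Group Γ] [Countable Γ] [DecidableEq Γ]
    (φ : Finset Γ → ℝ)
    (h0 : φ ∅ = 0)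
    (hinv : ∀ F : Finset Γ, F.Nonempty → ∀ s : Γ, φ (F.image (fun t => t * s)) = φ F)
    (hsub : ∀ F₁ F₂ : Finset Γ, F₁.Nonempty → F₂.Nonempty →
      φ (F₁ ∪ F₂) + φ (F₁ ∩ F₂) ≤ φ F₁ + φ F₂)
    (m : ℕ) (F : Finset Γ) (hF : F.Nonempty)
    (Fj : Fin m → Finset Γ) (hFj : ∀ j, (Fj j).Nonempty)
    (lam : Fin m → ℝ) (hlam : ∀ j, lam j ∈ Set.Ioc (0 : ℝ) 1)
    (hind : ∀ s : Γ, (if s ∈ F then (1 : ℝ) else 0) =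
      ∑ j : Fin m, lam j * (if s ∈ Fj j then (1 : ℝ) else 0)) :
    φ F ≤ ∑ j : Fin m, lam j * φ (Fj j) :=
  phi_le_of_indicator_combination_general φ h0 hsub m F Fj lam hlam hind
end

section
/- Let Γ be a countable discrete amenable group and let φ be a real-valued function defined on the finite subsets of Γ such that: (1) φ(∅) = 0; (2) φ(Fs) = φ(F) for every nonempty finite F ⊆ Γ and s ∈ Γ; (3) φ(F₁ ∪ F₂) + φ(F₁ ∩ F₂) ≤ φ(F₁) + φ(F₂) for all nonempty finite F₁, F₂ ⊆ Γ. Then φ(F)/|F| converges to inf_{F} φ(F)/|F| (the infimum taken over all nonempty finite subsets F of Γ) as the nonempty finite subset F becomes more and more left invariant; concretely, for every real number c with c > φ(F₀)/|F₀| for some nonempty finite F₀ ⊆ Γ, there exist a nonempty finite K ⊆ Γ and δ > 0 such that φ(F)/|F| < c for every F ∈ B(K,δ). -/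
/-!
Take `K = F₀`. For `F ∈ B(F₀, δ)` let `A = {t ∈ F : F₀ t ⊆ F}`. The right translates `F₀ t`,
`t ∈ A`, together with singletons padding every point of `F` up to multiplicity `|F₀|`, form an
exact `|F₀|`-fold cover of `F`, so Shearer's inequality for strongly subadditive `φ` and right
invariance give `|F₀| φ(F) ≤ |A| φ(F₀) + |F₀| (|F| - |A|) φ({1})`. As `|F| - |A| ≤ δ |F|`, this is
`φ(F) ≤ |F| φ(F₀)/|F₀| + O(δ |F|)`, which is `< c |F|` for small `δ`.
-/

/-- `F` belongs to `B(K, δ)`: `F` is a nonempty finite subset of `Γ` such that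
`|{t ∈ F : Kt ⊆ F}| ≥ (1 − δ)|F|`. -/
def memApproxInv {Γ : Type*} [Group Γ] [DecidableEq Γ] (K : Finset Γ) (δ : ℝ)
    (F : Finset Γ) : Prop :=
  F.Nonempty ∧ (1 - δ) * (F.card : ℝ) ≤ ((F.filter fun t => ∀ k ∈ K, k * t ∈ F).card : ℝ)

open Finset

def StronglySubadditive {α : Type*} [DecidableEq α] (φ : Finset α → ℝ) : Prop :=
  ∀ s t : Finset α, φ (s ∪ t) + φ (s ∩ t) ≤ φ s + φ t

namespace StronglySubadditive

variable {α ι : Type*} [DecidableEq α] {φ : Finset α → ℝ}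

theorem of_nonempty (h0 : φ ∅ = 0)
    (hφ : ∀ s t : Finset α, s.Nonempty → t.Nonempty → φ (s ∪ t) + φ (s ∩ t) ≤ φ s + φ t) :
    StronglySubadditive φ := by
  intro s t
  rcases s.eq_empty_or_nonempty with rfl | hs
  · simp [h0]
  rcases t.eq_empty_or_nonempty with rfl | ht
  · simp [h0]
  exact hφ s t hs ht

theorem sub_erase_le (hφ : StronglySubadditive φ) {s t : Finset α} (hst : s ⊆ t) {x : α}
    (hx : x ∈ s) : φ t - φ (t.erase x) ≤ φ s - φ (s.erase x) := by
  have h := hφ s (t.erase x)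
  rw [union_erase_of_mem hx, union_eq_right.2 hst, inter_erase, inter_eq_left.2 hst] at h
  linarith

theorem mul_le_sum_of_cover (hφ : StronglySubadditive φ) (h0 : φ ∅ = 0) {J : Finset ι}
    {w : ι → ℝ} (hw : ∀ j ∈ J, 0 ≤ w j) {k : ℝ} {A : ι → Finset α} {u : Finset α}
    (hA : ∀ j ∈ J, A j ⊆ u) (hcov : ∀ x ∈ u, ∑ j ∈ J with x ∈ A j, w j = k) :
    k * φ u ≤ ∑ j ∈ J, w j * φ (A j) := by
  induction u using Finset.induction_on generalizing A with
  | empty =>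
    rw [h0, mul_zero]
    exact (sum_eq_zero fun j hj => by rw [subset_empty.1 (hA j hj), h0, mul_zero]).ge
  | insert x u hx ih =>
    -- Adding `x` to `u` gains no more than adding `x` to any `(A j).erase x ⊆ u`.
    have hA' : ∀ j ∈ J, (A j).erase x ⊆ u := fun j hj => subset_insert_iff.1 (hA j hj)
    have hcov' : ∀ y ∈ u, ∑ j ∈ J with y ∈ (A j).erase x, w j = k := by
      intro y hy
      have hyx : y ≠ x := ne_of_mem_of_not_mem hy hx
      simpa only [mem_erase, hyx, ne_eq, not_false_eq_true, true_and] using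
        hcov y (mem_insert_of_mem hy)
    have hstep : k * (φ (insert x u) - φ u) ≤
        ∑ j ∈ J, w j * (φ (A j) - φ ((A j).erase x)) := by
      calc k * (φ (insert x u) - φ u)
          = ∑ j ∈ J with x ∈ A j, w j * (φ (insert x u) - φ u) := by
            rw [← sum_mul, hcov x (mem_insert_self x u)]
        _ ≤ ∑ j ∈ J with x ∈ A j, w j * (φ (A j) - φ ((A j).erase x)) := by
            refine sum_le_sum fun j hj => ?_
            rw [mem_filter] at hj
            refine mul_le_mul_of_nonneg_left ?_ (hw j hj.1)
            simpa [erase_insert hx] using hφ.sub_erase_le (hA j hj.1) hj.2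
        _ = ∑ j ∈ J, w j * (φ (A j) - φ ((A j).erase x)) := by
            refine sum_filter_of_ne fun j _ hne => ?_
            by_contra hxj
            simp [erase_eq_of_notMem hxj] at hne
    have := ih hA' hcov'
    simp only [mul_sub, sum_sub_distrib] at hstep
    linarith

theorem mul_le_sum_add_sum_singleton (hφ : StronglySubadditive φ) (h0 : φ ∅ = 0)
    {J : Finset ι} {w : ι → ℝ} (hw : ∀ j ∈ J, 0 ≤ w j) {k : ℝ} {A : ι → Finset α}
    {u : Finset α} (hA : ∀ j ∈ J, A j ⊆ u) (hcov : ∀ x ∈ u, ∑ j ∈ J with x ∈ A j, w j ≤ k) :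
    k * φ u ≤ ∑ j ∈ J, w j * φ (A j) + ∑ x ∈ u, (k - ∑ j ∈ J with x ∈ A j, w j) * φ {x} := by
  have key := hφ.mul_le_sum_of_cover h0 (J := J.disjSum u)
    (w := Sum.elim w fun x => k - ∑ j ∈ J with x ∈ A j, w j) (A := Sum.elim A fun x => {x})
    (k := k) (u := u) ?_ ?_ ?_
  · simpa only [sum_disjSum, Sum.elim_inl, Sum.elim_inr] using key
  · rintro (j | x) h
    · exact hw j (inl_mem_disjSum.1 h)
    · exact sub_nonneg.2 (hcov x (inr_mem_disjSum.1 h))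
  · rintro (j | x) h
    · exact hA j (inl_mem_disjSum.1 h)
    · exact singleton_subset_iff.2 (inr_mem_disjSum.1 h)
  · intro x hx
    rw [sum_filter, sum_disjSum, ← sum_filter]
    simp only [Sum.elim_inl, Sum.elim_inr, mem_singleton, sum_ite_eq, hx, if_true]
    -- the two filters carry different (defeq) decidability instances
    convert add_sub_cancel _ k using 3
    rfl

end StronglySubadditive

section Group

variable {Γ : Type*} [Group Γ] [DecidableEq Γ]

theorem card_filter_mem_image_mul_right_le (s A : Finset Γ) (x : Γ) :
    #{t ∈ A | x ∈ s.image (· * t)} ≤ #s := by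
  refine card_le_card_of_injOn (fun t => x * t⁻¹) (fun t ht => ?_) fun t₁ _ t₂ _ h => ?_
  · obtain ⟨g, hg, rfl⟩ := mem_image.1 (mem_filter.1 ht).2
    simpa using hg
  · simpa using h

theorem sum_card_filter_mem_image_mul_right {s A u : Finset Γ}
    (h : ∀ t ∈ A, s.image (· * t) ⊆ u) :
    ∑ x ∈ u, #{t ∈ A | x ∈ s.image (· * t)} = #A * #s := by
  calc ∑ x ∈ u, #{t ∈ A | x ∈ s.image (· * t)}
      = ∑ t ∈ A, #{x ∈ u | x ∈ s.image (· * t)} :=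
        sum_card_bipartiteAbove_eq_sum_card_bipartiteBelow _
    _ = ∑ t ∈ A, #s := sum_congr rfl fun t ht => by
        rw [filter_mem_eq_inter, inter_eq_right.2 (h t ht),
          card_image_of_injective _ (mul_left_injective t)]
    _ = #A * #s := by rw [sum_const, smul_eq_mul]

theorem StronglySubadditive.le_of_forall_mul_mem {φ : Finset Γ → ℝ} (hφ : StronglySubadditive φ)
    (h0 : φ ∅ = 0) (hinv : ∀ s : Finset Γ, s.Nonempty → ∀ g : Γ, φ (s.image (· * g)) = φ s)
    {s A u : Finset Γ} (hs : s.Nonempty) (hA : ∀ t ∈ A, ∀ g ∈ s, g * t ∈ u) :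
    φ u ≤ #A * (φ s / #s) + (#u - #A) * φ {1} := by
  have hsub : ∀ t ∈ A, s.image (· * t) ⊆ u := fun t ht => by
    simpa only [image_subset_iff] using hA t ht
  have key := hφ.mul_le_sum_add_sum_singleton h0 (w := fun _ => 1) (k := #s)
    (fun _ _ => zero_le_one) hsub fun x _ => by
      simpa using card_filter_mem_image_mul_right_le s A x
  have hsingleton : ∀ x : Γ, φ {x} = φ {1} := fun x => by
    simpa using hinv {1} (singleton_nonempty 1) x
  simp only [one_mul, hinv s hs, sum_const, nsmul_eq_mul, mul_one, hsingleton, ← sum_mul,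
    sum_sub_distrib] at key
  rw [← Nat.cast_sum, sum_card_filter_mem_image_mul_right hsub, Nat.cast_mul] at key
  have hs' : (0 : ℝ) < #s := by exact_mod_cast hs.card_pos
  refine le_of_mul_le_mul_left (key.trans_eq ?_) hs'
  field_simp

end Group

theorem exists_pos_forall_mul_add_sub_mul_lt {a c : ℝ} (hac : a < c) (b : ℝ) :
    ∃ δ > 0, ∀ m n : ℝ, 0 < n → (1 - δ) * n ≤ m → m ≤ n → m * a + (n - m) * b < c * n := by
  refine ⟨(c - a) / (|b - a| + 1), by have := sub_pos.2 hac; positivity, ?_⟩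
  intro m n hn hδm hmn
  set δ := (c - a) / (|b - a| + 1)
  have hδ : δ * (|b - a| + 1) = c - a := div_mul_cancel₀ _ (by positivity)
  have hδpos : 0 < δ := by have := sub_pos.2 hac; positivity
  calc m * a + (n - m) * b = n * a + (n - m) * (b - a) := by ring
    _ ≤ n * a + (n - m) * |b - a| := by
        gcongr
        exact le_abs_self _
    _ ≤ n * a + δ * n * |b - a| := by gcongr; linarith
    _ < n * a + δ * n * (|b - a| + 1) := by gcongr; linarith
    _ = c * n := by linear_combination n * hδ

theorem phi_div_card_tendsto_inf_general {Γ : Type*} [Group Γ] [DecidableEq Γ]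
    (φ : Finset Γ → ℝ)
    (h0 : φ ∅ = 0)
    (hinv : ∀ F : Finset Γ, F.Nonempty → ∀ s : Γ, φ (F.image (fun t => t * s)) = φ F)
    (hsub : ∀ F₁ F₂ : Finset Γ, F₁.Nonempty → F₂.Nonempty →
      φ (F₁ ∪ F₂) + φ (F₁ ∩ F₂) ≤ φ F₁ + φ F₂) :
    ∀ c : ℝ, (∃ F₀ : Finset Γ, F₀.Nonempty ∧ φ F₀ / (F₀.card : ℝ) < c) →
      ∃ (K : Finset Γ) (δ : ℝ), K.Nonempty ∧ 0 < δ ∧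
        ∀ F : Finset Γ, memApproxInv K δ F → φ F / (F.card : ℝ) < c := by
  rintro c ⟨F₀, hF₀, hc⟩
  obtain ⟨δ, hδ, hlt⟩ := exists_pos_forall_mul_add_sub_mul_lt hc (φ {1})
  refine ⟨F₀, δ, hF₀, hδ, fun F ⟨hF, hFδ⟩ => ?_⟩
  have hFpos : (0 : ℝ) < #F := by exact_mod_cast hF.card_pos
  rw [div_lt_iff₀ hFpos]
  calc φ F ≤ _ := (StronglySubadditive.of_nonempty h0 hsub).le_of_forall_mul_mem h0 hinv hF₀
        (A := F.filter fun t => ∀ g ∈ F₀, g * t ∈ F) fun t ht => (mem_filter.1 ht).2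
    _ < c * #F := hlt _ _ hFpos hFδ (by exact_mod_cast card_filter_le _ _)

/-- **Ornstein–Weiss type convergence for strongly subadditive invariant set functions.**
Let `Γ` be a countable discrete amenable group and `φ` a real-valued function on finite
subsets of `Γ` satisfying `φ(∅) = 0`, right invariance, and strong subadditivity.  Then
`φ(F)/|F|` converges to `inf_F φ(F)/|F|` as `F` becomes more and more left invariant:
for every real `c` exceeding `φ(F₀)/|F₀|` for some nonempty finite `F₀`, there are a
nonempty finite `K ⊆ Γ` and `δ > 0` such that `φ(F)/|F| < c` for every `F ∈ B(K,δ)`. -/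
theorem phi_div_card_tendsto_inf {Γ : Type*} [Group Γ] [Countable Γ] [DecidableEq Γ]
    (hamen : ∀ K : Finset Γ, K.Nonempty → ∀ δ : ℝ, 0 < δ → ∃ F : Finset Γ, memApproxInv K δ F)
    (φ : Finset Γ → ℝ)
    (h0 : φ ∅ = 0)
    (hinv : ∀ F : Finset Γ, F.Nonempty → ∀ s : Γ, φ (F.image (fun t => t * s)) = φ F)
    (hsub : ∀ F₁ F₂ : Finset Γ, F₁.Nonempty → F₂.Nonempty →
      φ (F₁ ∪ F₂) + φ (F₁ ∩ F₂) ≤ φ F₁ + φ F₂) :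
    ∀ c : ℝ, (∃ F₀ : Finset Γ, F₀.Nonempty ∧ φ F₀ / (F₀.card : ℝ) < c) →
      ∃ (K : Finset Γ) (δ : ℝ), K.Nonempty ∧ 0 < δ ∧
        ∀ F : Finset Γ, memApproxInv K δ F → φ F / (F.card : ℝ) < c :=
  phi_div_card_tendsto_inf_general φ h0 hinv hsub
end

section
/- Let Γ be a countable discrete group, d ≥ 1, and g ∈ M_d(ℂΓ), written g = Σ_{s∈Γ} g_s s with g_s ∈ M_d(ℂ) finitely supported. Suppose there is a nonzero finitely supported x : Γ → ℂ^d such that Σ_{s∈Γ} g_s x(s⁻¹t) = 0 for all t ∈ Γ, and let K ⊆ Γ be the (finite, nonempty) support of x. Then for every nonempty finite subset F ⊆ Γ with |{t ∈ F : Kt ⊆ F}| ≥ |F|/2, the compression g_F is not injective; in particular det(g_F) = 0. -/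
/-!
The kernel of left convolution by `g` is invariant under right translation. The density
hypothesis gives some `r ∈ F` with `K r ⊆ F`, so the translate `s ↦ x (s r⁻¹)` is a nonzero
solution supported in `F`; on such solutions convolution by `g` is computed by `g_F`, so the
restriction of the translate to `F` is a nonzero vector in the kernel of `g_F`.
-/

/-- The compression `g_F` of `g = Σ_s g_s s ∈ M_d(ℂΓ)`: the complex matrix indexed by
`F × {1,…,d}` with entries `g_F((s,i),(t,j)) = (g_{s t⁻¹})_{i,j}`. -/
def grpCompression {Γ : Type*} [Group Γ] {d : ℕ} (g : Γ → Matrix (Fin d) (Fin d) ℂ)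
    (F : Finset Γ) :
    Matrix ({a // a ∈ F} × Fin d) ({a // a ∈ F} × Fin d) ℂ :=
  Matrix.of fun p q => g (p.1.1 * q.1.1⁻¹) p.2 q.2

open Matrix

theorem restrict_ne_zero_of_support_subset {Γ : Type*} {d : ℕ} {F : Finset Γ}
    {y : Γ → Fin d → ℂ} (hy : ∀ s ∉ F, y s = 0) (hy0 : y ≠ 0) : (fun q : {a // a ∈ F} × Fin d => y q.1 q.2) ≠ 0 := by
  obtain ⟨s, hs⟩ := Function.ne_iff.mp hy0
  obtain ⟨i, hi⟩ := Function.ne_iff.mp hs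
  have hsF : s ∈ F := by_contra fun h => hs (hy s h)
  exact fun h => hi (congrFun h (⟨s, hsF⟩, i))

section

variable {Γ : Type*} [Group Γ] {d : ℕ}

theorem finsum_mulVec_mul_inv (g : Γ → Matrix (Fin d) (Fin d) ℂ) (y : Γ → Fin d → ℂ) (t : Γ) :
    ∑ᶠ s, g (t * s⁻¹) *ᵥ y s = ∑ᶠ u, g u *ᵥ y (u⁻¹ * t) :=
  finsum_eq_of_bijective (fun s => t * s⁻¹) ((Equiv.inv Γ).trans (Equiv.mulLeft t)).bijective
    fun s => by simp

theorem grpCompression_mulVec_eq_finsum (g : Γ → Matrix (Fin d) (Fin d) ℂ) {F : Finset Γ}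
    {y : Γ → Fin d → ℂ} (hy : ∀ s ∉ F, y s = 0) (p : {a // a ∈ F} × Fin d) :
    (grpCompression g F *ᵥ fun q => y q.1 q.2) p = (∑ᶠ u, g u *ᵥ y (u⁻¹ * p.1)) p.2 := by
  have hsupp : (Function.support fun s => g (p.1 * s⁻¹) *ᵥ y s) ⊆ F := fun s hs => by
    by_contra hsF
    exact hs (by simp [hy s hsF])
  rw [← finsum_mulVec_mul_inv, finsum_eq_finsetSum_of_support_subset _ hsupp,
    ← Finset.sum_coe_sort F, Finset.sum_apply]
  simp [grpCompression, mulVec, dotProduct, Fintype.sum_prod_type]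

theorem grpCompression_mulVec_eq_zero {g : Γ → Matrix (Fin d) (Fin d) ℂ} {F : Finset Γ}
    {y : Γ → Fin d → ℂ} (hy : ∀ s ∉ F, y s = 0) (hconv : ∀ t, ∑ᶠ s, g s *ᵥ y (s⁻¹ * t) = 0) :
    (grpCompression g F *ᵥ fun q => y q.1 q.2) = 0 := by
  funext p
  rw [grpCompression_mulVec_eq_finsum g hy, hconv]
  rfl

end

theorem compression_not_injective_of_kernel_general {Γ : Type*} [Group Γ]
    [DecidableEq Γ] (d : ℕ)
    (g : Γ → Matrix (Fin d) (Fin d) ℂ)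
    (x : Γ → Fin d → ℂ) (hx : x ≠ 0)
    (K : Finset Γ) (hK : ∀ s : Γ, s ∈ K ↔ x s ≠ 0)
    (hconv : ∀ t : Γ, ∑ᶠ s : Γ, (g s).mulVec (x (s⁻¹ * t)) = 0)
    (F : Finset Γ) (hF : F.Nonempty)
    (hhalf : (F.card : ℝ) / 2 ≤ ((F.filter fun t => ∀ k ∈ K, k * t ∈ F).card : ℝ)) :
    (¬ Function.Injective (grpCompression g F).mulVec) ∧ (grpCompression g F).det = 0 := by
  obtain ⟨r, -, hKr⟩ : ∃ r ∈ F, ∀ k ∈ K, k * r ∈ F := by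
    have : (0 : ℝ) < (F.filter fun t => ∀ k ∈ K, k * t ∈ F).card :=
      lt_of_lt_of_le (by have := hF.card_pos; positivity) hhalf
    exact Finset.filter_nonempty_iff.mp (Finset.card_pos.mp (by exact_mod_cast this))
  set y : Γ → Fin d → ℂ := fun s => x (s * r⁻¹)
  have hyF : ∀ s ∉ F, y s = 0 := fun s hs => by
    by_contra h
    exact hs (by simpa using hKr _ ((hK _).mpr h))
  have hy0 : y ≠ 0 := fun h => hx (funext fun k => by simpa [y] using congrFun h (k * r))
  have hker := grpCompression_mulVec_eq_zero hyF fun t => by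
    simpa only [y, mul_assoc] using hconv (t * r⁻¹)
  have hv := restrict_ne_zero_of_support_subset hyF hy0
  exact ⟨fun hinj => hv (hinj (hker.trans (mulVec_zero _).symm)),
    exists_mulVec_eq_zero_iff.mp ⟨_, hv, hker⟩⟩

/-- **Compressions of a left zero divisor are singular.**
Let `g ∈ M_d(ℂΓ)` and suppose there is a nonzero finitely supported `x : Γ → ℂ^d` with
`Σ_s g_s x(s⁻¹ t) = 0` for all `t`, with support `K`.  Then for every nonempty finite
`F ⊆ Γ` with `|{t ∈ F : Kt ⊆ F}| ≥ |F|/2`, the compression `g_F` is not injective;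
in particular `det (g_F) = 0`. -/
theorem compression_not_injective_of_kernel {Γ : Type*} [Group Γ] [Countable Γ]
    [DecidableEq Γ] (d : ℕ) (hd : 1 ≤ d)
    (g : Γ → Matrix (Fin d) (Fin d) ℂ) (hgfin : (Function.support g).Finite)
    (x : Γ → Fin d → ℂ) (hx : x ≠ 0)
    (K : Finset Γ) (hK : ∀ s : Γ, s ∈ K ↔ x s ≠ 0)
    (hconv : ∀ t : Γ, ∑ᶠ s : Γ, (g s).mulVec (x (s⁻¹ * t)) = 0)
    (F : Finset Γ) (hF : F.Nonempty)
    (hhalf : (F.card : ℝ) / 2 ≤ ((F.filter fun t => ∀ k ∈ K, k * t ∈ F).card : ℝ)) :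
    (¬ Function.Injective (grpCompression g F).mulVec) ∧ (grpCompression g F).det = 0 :=
  compression_not_injective_of_kernel_general d g x hx K hK hconv F hF hhalf
end

section
/- Let L ⊆ ℂ be a finite Galois extension of ℚ with Galois group G, let Γ be a countable discrete group, and let d ≥ 1. Let g ∈ M_d(𝒪_L Γ), written g = Σ_{s∈K} g_s s where K ⊆ Γ is the finite nonempty support of g and each g_s ∈ M_d(𝒪_L) is a matrix with entries algebraic integers in L. Assume g = g* and that for every nonempty finite subset F' ⊆ Γ the compression g_{F'} is positive definite. Let C > 0 be such that ‖σ(g_s)‖ ≤ C for all s ∈ K and all σ ∈ G, where σ(g_s) denotes entrywise application of σ and ‖·‖ is the operator norm on M_d(ℂ). Then for every nonempty finite subset F ⊆ Γ one has det(g_F) ≥ (C·|K|)^{−d·|F|·(|G|−1)}. -/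
open Matrix
open scoped ComplexOrder

/-!
Let `x = det g_F`, computed in `L`. It is a nonzero algebraic integer (positive definiteness), so
its norm `∏_σ σ x` is a nonzero rational integer and `∏_σ |σ x| ≥ 1`. Each conjugate `σ x` is the
determinant of the compression of `σ g`, which is a sum over `s ∈ K` of block partial permutation
matrices with blocks `σ g_s`; hence its operator norm is at most `C |K|`, and
`|σ x| ≤ (C |K|)^(d |F|)`. Dividing out the `|G| - 1` nontrivial conjugates bounds `x = |x|`
from below.
-/

open scoped Matrix.Norms.L2Operator

theorem Matrix.l2_opNorm_le_of_mulVec {𝕜 m n : Type*} [RCLike 𝕜] [Fintype m] [Fintype n]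
    [DecidableEq n] (A : Matrix m n 𝕜) {B : ℝ} (hB : 0 ≤ B)
    (h : ∀ v, √(∑ i, ‖(A *ᵥ v) i‖ ^ 2) ≤ B * √(∑ j, ‖v j‖ ^ 2)) : ‖A‖ ≤ B := by
  rw [l2_opNorm_def]
  exact ContinuousLinearMap.opNorm_le_bound _ hB fun x => by
    simpa [EuclideanSpace.norm_eq] using h x.ofLp

theorem Matrix.norm_det_le_l2_opNorm_pow {n : Type*} [Fintype n] [DecidableEq n]
    (M : Matrix n n ℂ) :
    ‖M.det‖ ≤ ‖M‖ ^ Fintype.card n := by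
  cases isEmpty_or_nonempty n
  · simp [Matrix.det_isEmpty]
  have hroot : ∀ r ∈ M.charpoly.roots.map nnnormHom, r ≤ ‖M‖₊ := by
    simp only [Multiset.mem_map]
    rintro _ ⟨r, hr, rfl⟩
    exact_mod_cast spectrum.norm_le_norm_of_mem <| mem_spectrum_of_isRoot_charpoly <|
      (Polynomial.mem_roots (charpoly_monic M).ne_zero).1 hr
  have := Multiset.prod_le_pow_card _ _ hroot
  rw [Multiset.card_map, IsAlgClosed.card_roots_eq_natDegree, charpoly_natDegree_eq_dim,
    ← map_multiset_prod, ← det_eq_prod_roots_charpoly] at this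
  exact_mod_cast this

theorem Finset.sum_comp_le_sum_of_injective {α : Type*} {e : α → α} (he : e.Injective)
    (F : Finset α) {f : α → ℝ} (hf : ∀ a, 0 ≤ f a) (hfF : ∀ a ∉ F, f a = 0) :
    ∑ a ∈ F, f (e a) ≤ ∑ a ∈ F, f a := by
  classical
  calc ∑ a ∈ F, f (e a) = ∑ b ∈ F.image e, f b := (sum_image fun _ _ _ _ h => he h).symm
    _ = ∑ b ∈ F.image e ∩ F, f b :=
      (sum_subset inter_subset_left fun b _ hb => hfF b fun h => hb (mem_inter.2 ⟨‹_›, h⟩)).symm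
    _ ≤ ∑ b ∈ F, f b := sum_le_sum_of_subset_of_nonneg inter_subset_right fun b _ _ => hf b

section Compression

variable {Γ : Type*} {d : ℕ}

open Classical in
noncomputable def compressionBlock (F : Finset Γ) (v : {a // a ∈ F} × Fin d → ℂ) (b : Γ) :
    EuclideanSpace ℂ (Fin d) :=
  WithLp.toLp 2 fun j => if h : b ∈ F then v (⟨b, h⟩, j) else 0

theorem compressionBlock_of_notMem {F : Finset Γ} (v : {a // a ∈ F} × Fin d → ℂ) {b : Γ}
    (hb : b ∉ F) : compressionBlock F v b = 0 := by
  ext j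
  simp [compressionBlock, hb]

theorem sum_norm_sq_compressionBlock (F : Finset Γ) (v : {a // a ∈ F} × Fin d → ℂ) :
    ∑ b ∈ F, ‖compressionBlock F v b‖ ^ 2 = ∑ p, ‖v p‖ ^ 2 := by
  rw [← Finset.sum_coe_sort F, Fintype.sum_prod_type]
  refine Finset.sum_congr rfl fun b _ => ?_
  simp [compressionBlock, EuclideanSpace.norm_sq_eq]

theorem grpCompression_single_mulVec [Group Γ] [DecidableEq Γ] (s : Γ)
    (A : Matrix (Fin d) (Fin d) ℂ) (F : Finset Γ) (v : {a // a ∈ F} × Fin d → ℂ)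
    (p : {a // a ∈ F} × Fin d) :
    (grpCompression (Pi.single s A) F *ᵥ v) p = (A *ᵥ compressionBlock F v (s⁻¹ * p.1)) p.2 := by
  obtain ⟨a, i⟩ := p
  have hv : ∀ b : {a // a ∈ F}, ∀ j, v (b, j) = compressionBlock F v b j := fun b j => by
    simp [compressionBlock, b.2]
  have hsingle : ∀ b : Γ, (Pi.single s A : Γ → Matrix (Fin d) (Fin d) ℂ) (a.1 * b⁻¹) =
      if b = s⁻¹ * a then A else 0 := fun b => by
    simp_rw [Pi.single_apply, mul_inv_eq_iff_eq_mul, eq_inv_mul_iff_mul_eq, eq_comm]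
  simp only [mulVec, dotProduct, grpCompression, of_apply, Fintype.sum_prod_type, hsingle, hv]
  rw [Finset.sum_coe_sort F (fun c => ∑ j, (if c = s⁻¹ * a then A else 0) i j *
    compressionBlock F v c j), Finset.sum_eq_single (s⁻¹ * a.1)]
  · simp
  · intro b _ hb
    simp [hb]
  · intro ha
    simp [compressionBlock_of_notMem v ha]

theorem l2_opNorm_grpCompression_single_le [Group Γ] [DecidableEq Γ] (s : Γ)
    (A : Matrix (Fin d) (Fin d) ℂ) (F : Finset Γ) :
    ‖grpCompression (Pi.single s A) F‖ ≤ ‖A‖ := by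
  refine l2_opNorm_le_of_mulVec _ (norm_nonneg A) fun v => ?_
  rw [← Real.sqrt_sq (norm_nonneg A), ← Real.sqrt_mul (sq_nonneg _)]
  refine Real.sqrt_le_sqrt ?_
  calc ∑ p, ‖(grpCompression (Pi.single s A) F *ᵥ v) p‖ ^ 2
      = ∑ a ∈ F, ‖WithLp.toLp 2 (A *ᵥ compressionBlock F v (s⁻¹ * a))‖ ^ 2 := by
        simp_rw [grpCompression_single_mulVec, EuclideanSpace.norm_sq_eq]
        rw [Fintype.sum_prod_type, Finset.sum_coe_sort F
          (fun a => ∑ i, ‖(A *ᵥ compressionBlock F v (s⁻¹ * a)) i‖ ^ 2)]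
    _ ≤ ∑ a ∈ F, (‖A‖ * ‖compressionBlock F v (s⁻¹ * a)‖) ^ 2 := by
        gcongr
        exact l2_opNorm_mulVec A _
    _ = ‖A‖ ^ 2 * ∑ a ∈ F, ‖compressionBlock F v (s⁻¹ * a)‖ ^ 2 := by
        simp_rw [mul_pow, Finset.mul_sum]
    _ ≤ ‖A‖ ^ 2 * ∑ a ∈ F, ‖compressionBlock F v a‖ ^ 2 := by
        refine mul_le_mul_of_nonneg_left ?_ (sq_nonneg _)
        exact Finset.sum_comp_le_sum_of_injective (mul_right_injective s⁻¹) F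
          (f := fun b => ‖compressionBlock F v b‖ ^ 2) (fun _ => sq_nonneg _)
          fun b hb => by simp [compressionBlock_of_notMem v hb]
    _ = ‖A‖ ^ 2 * ∑ p, ‖v p‖ ^ 2 := by rw [sum_norm_sq_compressionBlock]

theorem grpCompression_eq_sum_single [Group Γ] [DecidableEq Γ]
    {h : Γ → Matrix (Fin d) (Fin d) ℂ} {K : Finset Γ} (hK : ∀ s ∉ K, h s = 0) (F : Finset Γ) :
    grpCompression h F = ∑ s ∈ K, grpCompression (Pi.single s (h s)) F := by
  have hsum : h = ∑ s ∈ K, Pi.single s (h s) := by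
    ext t : 1
    rw [Finset.sum_apply, Finset.sum_pi_single]
    split_ifs with ht
    exacts [rfl, hK t ht]
  ext p q
  conv_lhs => rw [hsum]
  simp [grpCompression, Matrix.sum_apply]

theorem l2_opNorm_grpCompression_le [Group Γ] [DecidableEq Γ]
    {h : Γ → Matrix (Fin d) (Fin d) ℂ} {K : Finset Γ} (hK : ∀ s ∉ K, h s = 0) (F : Finset Γ) :
    ‖grpCompression h F‖ ≤ ∑ s ∈ K, ‖h s‖ := by
  rw [grpCompression_eq_sum_single hK]
  exact (norm_sum_le _ _).trans <|
    Finset.sum_le_sum fun s _ => l2_opNorm_grpCompression_single_le s (h s) F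

end Compression

theorem one_le_prod_norm_algEquiv_apply {K : Type*} [Field K] [Algebra ℚ K]
    [FiniteDimensional ℚ K] [IsGalois ℚ K] (φ : K →+* ℂ) {x : K} (hx : IsIntegral ℤ x)
    (hx0 : x ≠ 0) : 1 ≤ ∏ σ : K ≃ₐ[ℚ] K, ‖φ (σ x)‖ := by
  obtain ⟨m, hm⟩ := IsIntegrallyClosed.isIntegral_iff.mp (Algebra.isIntegral_norm ℚ hx)
  have hm0 : m ≠ 0 := by
    rintro rfl
    exact Algebra.norm_ne_zero_iff.mpr hx0 (by rw [← hm, map_zero])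
  have hprod : ∏ σ : K ≃ₐ[ℚ] K, φ (σ x) = m := by
    rw [← map_prod, ← Algebra.norm_eq_prod_automorphisms, ← hm]
    simp
  rw [← norm_prod, hprod, Complex.norm_intCast]
  exact_mod_cast Int.one_le_abs hm0

theorem inv_pow_le_norm_of_isIntegral {K : Type*} [Field K] [Algebra ℚ K]
    [FiniteDimensional ℚ K] [IsGalois ℚ K] (φ : K →+* ℂ) {x : K} (hx : IsIntegral ℤ x)
    (hx0 : x ≠ 0) {B : ℝ} (hB : 0 < B) {n : ℕ} (hbound : ∀ σ : K ≃ₐ[ℚ] K, ‖φ (σ x)‖ ≤ B ^ n) :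
    (B ^ (n * (Nat.card (K ≃ₐ[ℚ] K) - 1)))⁻¹ ≤ ‖φ x‖ := by
  classical
  have hconj : ∏ σ ∈ Finset.univ.erase (1 : K ≃ₐ[ℚ] K), ‖φ (σ x)‖ ≤
      B ^ (n * (Nat.card (K ≃ₐ[ℚ] K) - 1)) := by
    calc ∏ σ ∈ Finset.univ.erase (1 : K ≃ₐ[ℚ] K), ‖φ (σ x)‖
        ≤ ∏ _σ ∈ Finset.univ.erase (1 : K ≃ₐ[ℚ] K), B ^ n :=
          Finset.prod_le_prod (fun _ _ => norm_nonneg _) fun σ _ => hbound σ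
      _ = B ^ (n * (Nat.card (K ≃ₐ[ℚ] K) - 1)) := by
          rw [Finset.prod_const, Finset.card_erase_of_mem (Finset.mem_univ _), Finset.card_univ,
            Nat.card_eq_fintype_card, ← pow_mul]
  rw [inv_le_iff_one_le_mul₀ (pow_pos hB _)]
  calc 1 ≤ ∏ σ : K ≃ₐ[ℚ] K, ‖φ (σ x)‖ := one_le_prod_norm_algEquiv_apply φ hx hx0
    _ = ‖φ x‖ * ∏ σ ∈ Finset.univ.erase (1 : K ≃ₐ[ℚ] K), ‖φ (σ x)‖ :=
        (Finset.mul_prod_erase _ (fun σ : K ≃ₐ[ℚ] K => ‖φ (σ x)‖) (Finset.mem_univ 1)).symm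
    _ ≤ ‖φ x‖ * B ^ (n * (Nat.card (K ≃ₐ[ℚ] K) - 1)) := by gcongr

theorem det_compression_ge_of_algebraic_integers_general
    (L : IntermediateField ℚ ℂ) [FiniteDimensional ℚ L] [IsGalois ℚ L]
    {Γ : Type*} [Group Γ] [DecidableEq Γ]
    (d : ℕ)
    (g : Γ → Matrix (Fin d) (Fin d) L)
    (hint : ∀ (s : Γ) (i j : Fin d), IsIntegral ℤ (g s i j))
    (K : Finset Γ) (hK : ∀ s : Γ, s ∈ K ↔ g s ≠ 0) (hKne : K.Nonempty)
    (hpos : ∀ F' : Finset Γ, F'.Nonempty →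
      (grpCompression (fun s => (g s).map (fun a : L => (a : ℂ))) F').PosDef)
    (C : ℝ) (hC : 0 < C)
    (hCbound : ∀ s ∈ K, ∀ σ : L ≃ₐ[ℚ] L, ∀ v : Fin d → ℂ,
      Real.sqrt (∑ i : Fin d,
          ‖((g s).map (fun a : L => ((σ a : L) : ℂ))).mulVec v i‖ ^ 2) ≤
        C * Real.sqrt (∑ i : Fin d, ‖v i‖ ^ 2))
    (F : Finset Γ) (hF : F.Nonempty) :
    (((C * (K.card : ℝ)) ^
        (-((d * F.card * (Nat.card (L ≃ₐ[ℚ] L) - 1) : ℕ) : ℤ)) : ℝ) : ℂ) ≤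
      (grpCompression (fun s => (g s).map (fun a : L => (a : ℂ))) F).det := by
  have hsupp : ∀ s ∉ K, g s = 0 := fun s hs => of_not_not fun h => hs ((hK s).2 h)
  set A : Matrix ({a // a ∈ F} × Fin d) ({a // a ∈ F} × Fin d) L :=
    of fun p q => g (p.1.1 * q.1.1⁻¹) p.2 q.2
  have hdet (σ : L ≃ₐ[ℚ] L) :
      (grpCompression (fun s => (g s).map fun a => ((σ a : L) : ℂ)) F).det = L.val (σ A.det) :=
    (RingHom.map_det ((L.val : L →+* ℂ).comp σ.toRingHom) A).symm
  have hA0 : 0 < L.val A.det := (hpos F hF).det_pos.trans_eq (hdet 1)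
  have hbound (σ : L ≃ₐ[ℚ] L) : ‖L.val (σ A.det)‖ ≤ (C * K.card) ^ (d * F.card) := by
    rw [← hdet σ]
    refine (norm_det_le_l2_opNorm_pow _).trans ?_
    rw [Fintype.card_prod, Fintype.card_coe, Fintype.card_fin, mul_comm F.card]
    gcongr
    calc _ ≤ ∑ s ∈ K, ‖(g s).map fun a => ((σ a : L) : ℂ)‖ :=
          l2_opNorm_grpCompression_le (fun s hs => by simp [hsupp s hs]) F
      _ ≤ ∑ _s ∈ K, C :=
          Finset.sum_le_sum fun s hs => l2_opNorm_le_of_mulVec _ hC.le (hCbound s hs σ)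
      _ = C * K.card := by rw [Finset.sum_const, nsmul_eq_mul, mul_comm]
  have hA : A.det ≠ 0 := fun h => hA0.ne' (by rw [h, map_zero])
  have hlower := inv_pow_le_norm_of_isIntegral L.val.toRingHom (IsIntegral.det fun p q => hint _ _ _)
    hA (mul_pos hC (by exact_mod_cast hKne.card_pos)) hbound
  have hdet1 : (grpCompression (fun s => (g s).map fun a : L => (a : ℂ)) F).det = L.val A.det :=
    hdet 1
  rw [hdet1, ← Complex.norm_of_nonneg' hA0.le, _root_.zpow_neg, zpow_natCast,
    Complex.real_le_real]
  exact hlower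

/-- **Lower bound for determinants of compressions of algebraic-integer group ring elements
(Lemma 3.12).**  Let `L ⊆ ℂ` be a finite Galois extension of `ℚ` with Galois group `G`, let
`Γ` be a countable discrete group and `d ≥ 1`.  Let `g = Σ_{s ∈ K} g_s s ∈ M_d(𝒪_L Γ)` be
self-adjoint with all compressions positive definite, where `K` is the finite nonempty
support of `g`.  If `‖σ(g_s)‖ ≤ C` (operator norm) for all `s ∈ K` and `σ ∈ G`, then for
every nonempty finite `F ⊆ Γ` one has `det (g_F) ≥ (C |K|)^{-d |F| (|G| - 1)}`. -/
theorem det_compression_ge_of_algebraic_integers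
    (L : IntermediateField ℚ ℂ) [FiniteDimensional ℚ L] [IsGalois ℚ L]
    {Γ : Type*} [Group Γ] [Countable Γ] [DecidableEq Γ]
    (d : ℕ) (hd : 1 ≤ d)
    (g : Γ → Matrix (Fin d) (Fin d) L)
    (hint : ∀ (s : Γ) (i j : Fin d), IsIntegral ℤ (g s i j))
    (K : Finset Γ) (hK : ∀ s : Γ, s ∈ K ↔ g s ≠ 0) (hKne : K.Nonempty)
    (hsa : ∀ s : Γ, ((g s⁻¹).map (fun a : L => (a : ℂ)))ᴴ = (g s).map (fun a : L => (a : ℂ)))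
    (hpos : ∀ F' : Finset Γ, F'.Nonempty →
      (grpCompression (fun s => (g s).map (fun a : L => (a : ℂ))) F').PosDef)
    (C : ℝ) (hC : 0 < C)
    (hCbound : ∀ s ∈ K, ∀ σ : L ≃ₐ[ℚ] L, ∀ v : Fin d → ℂ,
      Real.sqrt (∑ i : Fin d,
          ‖((g s).map (fun a : L => ((σ a : L) : ℂ))).mulVec v i‖ ^ 2) ≤
        C * Real.sqrt (∑ i : Fin d, ‖v i‖ ^ 2))
    (F : Finset Γ) (hF : F.Nonempty) :
    (((C * (K.card : ℝ)) ^
        (-((d * F.card * (Nat.card (L ≃ₐ[ℚ] L) - 1) : ℕ) : ℤ)) : ℝ) : ℂ) ≤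
      (grpCompression (fun s => (g s).map (fun a : L => (a : ℂ))) F).det :=
  det_compression_ge_of_algebraic_integers_general L d g hint K hK hKne hpos C hC hCbound F hF
end

section
/- Let ι be a nonempty finite type with n = |ι| elements, and let T : ℝ^ι → ℝ^ι be an injective, positive semidefinite self-adjoint linear map (with respect to the standard inner product). Let 0 < κ ≤ 1/2 and let D_κ denote the product of the eigenvalues of T lying in the interval (0, κ], counted with multiplicity (D_κ := 1 if there are none). Then every subset W ⊆ {x ∈ ℝ^ι : ‖Tx‖₂ ≤ (κ/4)·n^{1/2}} satisfying ‖x − y‖₂ > n^{1/2} for all distinct x, y ∈ W is finite and has cardinality at most 1/D_κ. -/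
/-!
Write vectors in an orthonormal eigenbasis of `T`. For `x, y ∈ W` we have
`‖T (x - y)‖ ≤ κ √n / 2`, so `x - y` has squared mass at most `n / 4` on the eigenvalues `> κ`;
hence the coordinates `P` along the eigenvalues in `(0, κ]` keep the points of `W` at distance
`≥ √n / 2`. The balls of radius `√n / 4` around the points `P x` are then disjoint, and the
diagonal map `Λ` with these small eigenvalues, of norm `≤ κ ≤ 1/2`, sends all of them into the
ball of radius `√n / 4` around `0` (as `‖Λ (P x)‖ ≤ ‖T x‖ ≤ κ √n / 4`). Since `Λ` multiplies
volumes by `D_κ`, comparing volumes gives `|W| · D_κ ≤ 1`.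
-/

open Matrix MeasureTheory Metric

theorem card_mul_abs_det_le_one_of_separated {E : Type*} [NormedAddCommGroup E]
    [NormedSpace ℝ E] [MeasurableSpace E] [BorelSpace E] [FiniteDimensional ℝ E]
    (L : E →ₗ[ℝ] E) {κ r : ℝ} (hL : ∀ v, ‖L v‖ ≤ κ * ‖v‖) (hκ : κ ≤ 1 / 2) (hr : 0 < r)
    (F : Finset E) (hF : ∀ q ∈ F, ‖L q‖ ≤ κ * r)
    (hsep : (F : Set E).Pairwise fun p q => 2 * r ≤ dist p q) :
    (F.card : ℝ) * |LinearMap.det L| ≤ 1 := by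
  by_cases hdet : LinearMap.det L = 0
  · simp [hdet]
  let μ := (Module.finBasis ℝ E).addHaar
  let e := L.equivOfDetNeZero hdet
  have hmaps : ∀ q ∈ F, L '' ball q r ⊆ closedBall 0 r := by
    rintro q hq _ ⟨v, hv, rfl⟩
    have hκ0 : 0 ≤ κ := nonneg_of_mul_nonneg_left ((norm_nonneg _).trans (hF q hq)) hr
    have hvq : ‖L (v - q)‖ ≤ κ * r :=
      (hL _).trans (mul_le_mul_of_nonneg_left (mem_ball_iff_norm.1 hv).le hκ0)
    rw [mem_closedBall_zero_iff, ← sub_add_cancel v q, map_add]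
    linarith [norm_add_le (L (v - q)) (L q), hF q hq, mul_le_mul_of_nonneg_right hκ hr.le]
  have hdisj : (F : Set E).PairwiseDisjoint fun q => L '' ball q r := fun p hp q hq hpq =>
    Set.disjoint_image_of_injective e.injective
      (ball_disjoint_ball (by linarith [hsep hp hq hpq]))
  have hmeas : ∀ q, MeasurableSet (L '' ball q r) := fun q =>
    (e.toContinuousLinearEquiv.isOpenMap _ isOpen_ball).measurableSet
  have hvol : (F.card : ENNReal) * ENNReal.ofReal |LinearMap.det L| * μ (ball 0 r)
      ≤ 1 * μ (ball 0 r) :=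
    calc (F.card : ENNReal) * ENNReal.ofReal |LinearMap.det L| * μ (ball 0 r)
        = ∑ q ∈ F, μ (L '' ball q r) := by
          simp [mul_assoc, Measure.addHaar_image_linearMap, Measure.addHaar_ball_center]
      _ = μ (⋃ q ∈ F, L '' ball q r) := (measure_biUnion_finset hdisj fun q _ => hmeas q).symm
      _ ≤ μ (closedBall 0 r) := measure_mono (Set.iUnion₂_subset hmaps)
      _ = 1 * μ (ball 0 r) := by
          rw [Measure.addHaar_closedBall μ 0 hr.le, ← Measure.addHaar_ball_of_pos μ 0 hr, one_mul]
  have hle := (ENNReal.mul_le_mul_iff_left (isOpen_ball.measure_pos μ (nonempty_ball.2 hr)).ne'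
    measure_ball_lt_top.ne).1 hvol
  rw [← ENNReal.ofReal_natCast, ← ENNReal.ofReal_mul (by positivity), ← ENNReal.ofReal_one] at hle
  exact (ENNReal.ofReal_le_ofReal_iff zero_le_one).1 hle

theorem OrthonormalBasis.repr_apply_eq_mul_of_isSymmetric {ι E : Type*} [Fintype ι]
    [NormedAddCommGroup E] [InnerProductSpace ℝ E] {A : E →ₗ[ℝ] E} (hA : A.IsSymmetric)
    (b : OrthonormalBasis ι ℝ E) {μ : ι → ℝ} (hb : ∀ i, A (b i) = μ i • b i) (v : E) (i : ι) :
    b.repr (A v) i = μ i * b.repr v i := by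
  rw [b.repr_apply_apply, b.repr_apply_apply, ← hA, hb, real_inner_smul_left]

theorem norm_toEuclideanLin_diagonal_le {ι : Type*} [Fintype ι] [DecidableEq ι] {μ : ι → ℝ}
    {κ : ℝ} (hκ : 0 ≤ κ) (hμ : ∀ i, |μ i| ≤ κ) (v : EuclideanSpace ℝ ι) :
    ‖toEuclideanLin (diagonal μ) v‖ ≤ κ * ‖v‖ := by
  refine pow_le_pow_iff_left₀ (norm_nonneg _) (by positivity) two_ne_zero |>.1 ?_
  rw [mul_pow, EuclideanSpace.real_norm_sq_eq, EuclideanSpace.real_norm_sq_eq, Finset.mul_sum]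
  refine Finset.sum_le_sum fun i _ => ?_
  rw [toLpLin_apply, WithLp.ofLp_toLp, mulVec_diagonal, mul_pow, ← sq_abs (μ i)]
  gcongr
  exact hμ i

namespace OrthonormalBasis

variable {ι E : Type*} [Fintype ι] [NormedAddCommGroup E] [InnerProductSpace ℝ E]
  (b : OrthonormalBasis ι ℝ E) (s : Finset ι)

noncomputable def coordsOn : E →ₗ[ℝ] EuclideanSpace ℝ s where
  toFun v := WithLp.toLp 2 fun j => b.repr v j
  map_add' v w := by ext; simp
  map_smul' c v := by ext; simp

@[simp]
theorem coordsOn_apply (v : E) (j : s) : b.coordsOn s v j = b.repr v j := rfl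

theorem sq_norm_coordsOn (v : E) : ‖b.coordsOn s v‖ ^ 2 = ∑ i ∈ s, b.repr v i ^ 2 := by
  rw [EuclideanSpace.real_norm_sq_eq, ← Finset.sum_coe_sort s]
  rfl

theorem norm_coordsOn_le (v : E) : ‖b.coordsOn s v‖ ≤ ‖v‖ := by
  rw [← b.repr.norm_map v]
  refine pow_le_pow_iff_left₀ (norm_nonneg _) (norm_nonneg _) two_ne_zero |>.1 ?_
  rw [sq_norm_coordsOn, EuclideanSpace.real_norm_sq_eq]
  exact Finset.sum_le_sum_of_subset_of_nonneg s.subset_univ fun i _ _ => sq_nonneg _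

variable {b} {A : E →ₗ[ℝ] E} {μ : ι → ℝ}

theorem coordsOn_map_eq [DecidableEq ι] (hA : ∀ v i, b.repr (A v) i = μ i * b.repr v i)
    (v : E) :
    b.coordsOn s (A v) = toEuclideanLin (diagonal fun j : s => μ j) (b.coordsOn s v) := by
  ext j
  simp [hA, toLpLin_apply, mulVec_diagonal]

theorem sq_mul_sq_norm_le_add_sq_norm_map (hA : ∀ v i, b.repr (A v) i = μ i * b.repr v i)
    {κ : ℝ} (hκ : 0 ≤ κ) (hs : ∀ i ∉ s, κ ≤ |μ i|) (v : E) :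
    κ ^ 2 * ‖v‖ ^ 2 ≤ κ ^ 2 * ‖b.coordsOn s v‖ ^ 2 + ‖A v‖ ^ 2 := by
  classical
  rw [← b.repr.norm_map v, ← b.repr.norm_map (A v), sq_norm_coordsOn,
    EuclideanSpace.real_norm_sq_eq, EuclideanSpace.real_norm_sq_eq, Finset.mul_sum,
    Finset.mul_sum, ← Finset.sum_add_sum_compl s, add_le_add_iff_left]
  calc ∑ i ∈ sᶜ, κ ^ 2 * b.repr v i ^ 2
      ≤ ∑ i ∈ sᶜ, (μ i * b.repr v i) ^ 2 := Finset.sum_le_sum fun i hi => by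
        rw [mul_pow, ← sq_abs (μ i)]
        gcongr
        exact hs i (Finset.mem_compl.1 hi)
    _ ≤ ∑ i, b.repr (A v) i ^ 2 := by
        simp only [hA]
        exact Finset.sum_le_sum_of_subset_of_nonneg sᶜ.subset_univ fun i _ _ => sq_nonneg _

theorem card_mul_abs_prod_le_one_of_separated [DecidableEq ι]
    (hA : ∀ v i, b.repr (A v) i = μ i * b.repr v i) {κ ρ : ℝ} (hκ0 : 0 < κ) (hκ : κ ≤ 1 / 2)
    (hρ : 0 < ρ) (hsmall : ∀ i ∈ s, |μ i| ≤ κ) (hlarge : ∀ i ∉ s, κ ≤ |μ i|) (F : Finset E)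
    (hF : ∀ x ∈ F, ‖A x‖ ≤ κ * ρ / 4) (hsep : (F : Set E).Pairwise fun x y => ρ < dist x y) :
    (F.card : ℝ) * |∏ i ∈ s, μ i| ≤ 1 := by
  set P := b.coordsOn s
  have hPsep : (F : Set E).Pairwise fun x y => 2 * (ρ / 4) ≤ dist (P x) (P y) := by
    intro x hx y hy hxy
    have hA_le : ‖A (x - y)‖ ^ 2 ≤ (κ * ρ / 2) ^ 2 := by
      rw [map_sub]
      gcongr
      linarith [norm_sub_le (A x) (A y), hF x hx, hF y hy]
    have hlt : (κ * ρ) ^ 2 < (κ * ‖x - y‖) ^ 2 := by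
      gcongr
      exact dist_eq_norm x y ▸ hsep hx hy hxy
    have hmass := sq_mul_sq_norm_le_add_sq_norm_map s hA hκ0.le hlarge (x - y)
    have hP_sq : κ ^ 2 * (ρ / 2) ^ 2 ≤ κ ^ 2 * ‖P (x - y)‖ ^ 2 := by nlinarith
    rw [dist_eq_norm, ← map_sub]
    nlinarith [le_of_mul_le_mul_left hP_sq (by positivity), norm_nonneg (P (x - y))]
  have hPinj : Set.InjOn P F := fun x hx y hy hPxy => by
    by_contra hxy
    have : 2 * (ρ / 4) ≤ dist (P x) (P y) := hPsep hx hy hxy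
    rw [hPxy, dist_self] at this
    linarith
  have hdet : LinearMap.det (toEuclideanLin (diagonal fun j : s => μ j)) = ∏ i ∈ s, μ i := by
    rw [LinearMap.det_toLpLin, det_diagonal, Finset.prod_coe_sort s μ]
  rw [← hdet, ← Finset.card_image_of_injOn hPinj]
  refine card_mul_abs_det_le_one_of_separated (r := ρ / 4) _
    (norm_toEuclideanLin_diagonal_le hκ0.le fun j : s => hsmall j j.2) hκ (by positivity) _ ?_ ?_
  · simp only [Finset.mem_image]
    rintro _ ⟨x, hx, rfl⟩
    rw [← coordsOn_map_eq s hA]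
    linarith [norm_coordsOn_le b s (A x), hF x hx]
  · simp only [Finset.coe_image]
    rintro _ ⟨x, hx, rfl⟩ _ ⟨y, hy, rfl⟩ hxy
    exact hPsep hx hy fun h => hxy (h ▸ rfl)

end OrthonormalBasis

theorem Set.finite_and_ncard_le_of_forall_finset_card_le {α : Type*} {W : Set α} {c : ℝ}
    (h : ∀ F : Finset α, ↑F ⊆ W → (F.card : ℝ) ≤ c) : W.Finite ∧ (W.ncard : ℝ) ≤ c := by
  have hfin : W.Finite := by
    by_contra hinf
    obtain ⟨F, hFW, hcard⟩ := Set.Infinite.exists_subset_card_eq hinf (⌈c⌉₊ + 1)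
    have := h F hFW
    rw [hcard] at this
    push_cast at this
    linarith [Nat.le_ceil c]
  refine ⟨hfin, ?_⟩
  simpa [Set.ncard_eq_toFinset_card W hfin] using h hfin.toFinset (by simp)

theorem Matrix.PosSemidef.eigenvalues_pos_of_injective {ι : Type*} [Fintype ι] [DecidableEq ι]
    {T : Matrix ι ι ℝ} (hT : T.PosSemidef) (hinj : Function.Injective T.mulVec) (i : ι) :
    0 < hT.1.eigenvalues i :=
  (hT.posDef_iff_isUnit.2 (mulVec_injective_iff_isUnit.1 hinj)).eigenvalues_pos i

theorem EuclideanSpace.norm_toLp_eq_sqrt {ι : Type*} [Fintype ι] (x : ι → ℝ) :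
    ‖WithLp.toLp 2 x‖ = √(∑ i, x i ^ 2) := by
  simp [EuclideanSpace.norm_eq]

/-- **Volume counting bound (Lemma 4.7).**
Let `ι` be a nonempty finite type with `n = |ι|` elements and `T` an injective positive
semidefinite self-adjoint operator on `ℝ^ι` (given as a matrix acting by `mulVec`).  For
`0 < κ ≤ 1/2`, let `D_κ` be the product of the eigenvalues of `T` in `(0, κ]` counted with
multiplicity.  Then any subset `W` of `{x : ‖Tx‖₂ ≤ (κ/4)·n^{1/2}}` whose points are
pairwise at Euclidean distance `> n^{1/2}` is finite of cardinality at most `1/D_κ`. -/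
theorem card_separated_le_inv_prod_small_eigenvalues
    {ι : Type*} [Fintype ι] [DecidableEq ι] [Nonempty ι]
    (T : Matrix ι ι ℝ) (hT : T.PosSemidef) (hinj : Function.Injective T.mulVec)
    (κ : ℝ) (hκ0 : 0 < κ) (hκ : κ ≤ 1 / 2)
    (W : Set (ι → ℝ))
    (hW : W ⊆ {x : ι → ℝ |
      Real.sqrt (∑ i : ι, (T.mulVec x i) ^ 2) ≤ κ / 4 * Real.sqrt (Fintype.card ι)})
    (hsep : ∀ x ∈ W, ∀ y ∈ W, x ≠ y →
      Real.sqrt (Fintype.card ι) < Real.sqrt (∑ i : ι, (x i - y i) ^ 2)) :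
    W.Finite ∧ (W.ncard : ℝ) ≤
      1 / ∏ i ∈ Finset.univ.filter (fun i => hT.1.eigenvalues i ∈ Set.Ioc 0 κ),
            hT.1.eigenvalues i := by
  set μ := hT.1.eigenvalues
  set s := Finset.univ.filter fun i => μ i ∈ Set.Ioc 0 κ
  have hpos := hT.eigenvalues_pos_of_injective hinj
  have hA : ∀ v i, hT.1.eigenvectorBasis.repr (toEuclideanLin T v) i
      = μ i * hT.1.eigenvectorBasis.repr v i :=
    hT.1.eigenvectorBasis.repr_apply_eq_mul_of_isSymmetric
      (isSymmetric_toEuclideanLin_iff.2 hT.1)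
      fun i => congrArg (WithLp.toLp 2) (hT.1.mulVec_eigenvectorBasis i)
  have hsmall : ∀ i ∈ s, |μ i| ≤ κ := fun i hi => by
    rw [abs_of_pos (hpos i)]
    exact (Finset.mem_filter.1 hi).2.2
  have hlarge : ∀ i ∉ s, κ ≤ |μ i| := fun i hi => by
    rw [abs_of_pos (hpos i)]
    by_contra! hle
    exact hi (Finset.mem_filter.2 ⟨Finset.mem_univ i, hpos i, hle.le⟩)
  have hD : 0 < ∏ i ∈ s, μ i := Finset.prod_pos fun i _ => hpos i
  refine Set.finite_and_ncard_le_of_forall_finset_card_le fun F hF => ?_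
  rw [le_div_iff₀ hD, ← abs_of_pos hD, ← F.card_map ⟨WithLp.toLp 2, WithLp.toLp_injective 2⟩]
  refine hT.1.eigenvectorBasis.card_mul_abs_prod_le_one_of_separated s hA hκ0 hκ
    (ρ := √(Fintype.card ι)) (Real.sqrt_pos.2 (Nat.cast_pos.2 Fintype.card_pos)) hsmall hlarge
    _ ?_ ?_
  · simp only [Finset.mem_map, Function.Embedding.coeFn_mk]
    rintro _ ⟨x, hx, rfl⟩
    rw [toLpLin_toLp, EuclideanSpace.norm_toLp_eq_sqrt, mul_div_right_comm]
    exact hW (hF hx)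
  · simp only [Finset.coe_map, Function.Embedding.coeFn_mk]
    rintro _ ⟨x, hx, rfl⟩ _ ⟨y, hy, rfl⟩ hxy
    rw [dist_eq_norm, ← WithLp.toLp_sub, EuclideanSpace.norm_toLp_eq_sqrt]
    exact hsep x (hF hx) y (hF hy) fun h => hxy (h ▸ rfl)
end

section
/- Let Γ be a countable discrete group, d ≥ 1, and f ∈ M_d(ℤΓ) with f = f* such that for every nonempty finite subset F' ⊆ Γ the compression f_{F'} is positive definite. Let J ⊆ (ℤΓ)^{1×d} be the set of rows of f and set ε = 1/(2‖f‖₁). Then for every nonempty finite subset F ⊆ Γ one has N_ε(X_{J,F}, ϑ_{F,∞}) ≥ det(f_F). -/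
open Matrix
open scoped ComplexOrder

/-- The supremum of cardinalities of subsets of `Z` that are pairwise `sep`-separated. -/
noncomputable def sepCount {P : Type*} (Z : Set P) (sep : P → P → Prop) : ℕ :=
  sSup {n : ℕ | ∃ W : Finset P, ↑W ⊆ Z ∧ (∀ x ∈ W, ∀ y ∈ W, x ≠ y → sep x y) ∧ W.card = n}

/-- The compression `f_F` of `f = Σ_s f_s s ∈ M_d(ℤΓ)`: the complex matrix indexed by
`F × {1,…,d}` with entries `f_F((s,i),(t,j)) = (f_{s t⁻¹})_{i,j}`. -/
def intCompression {Γ : Type*} [Group Γ] {d : ℕ} (f : Γ → Matrix (Fin d) (Fin d) ℤ)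
    (F : Finset Γ) :
    Matrix ({a // a ∈ F} × Fin d) ({a // a ∈ F} × Fin d) ℂ :=
  Matrix.of fun p q => ((f (p.1.1 * q.1.1⁻¹) p.2 q.2 : ℤ) : ℂ)

/-- `X_{J,F}` for `J` the set of rows of `f`: the set of `x ∈ ((ℝ/ℤ)^d)^Γ` with
`(f' x)_t = 0` for every row `f'` of `f` and every `t ∈ F`. -/
def XrowsF {Γ : Type*} [Group Γ] {d : ℕ} (f : Γ → Matrix (Fin d) (Fin d) ℤ) (F : Finset Γ) :
    Set (Γ → Fin d → AddCircle (1 : ℝ)) :=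
  {x | ∀ i : Fin d, ∀ t ∈ F, ∑ᶠ s : Γ, ∑ j : Fin d, f s i j • x (s⁻¹ * t) j = 0}

/-- `ϑ_{F,∞}(x,y) > ε`. -/
def thetaInfSep {Γ : Type*} [Group Γ] {d : ℕ} (ε : ℝ) (F : Finset Γ)
    (x y : Γ → Fin d → AddCircle (1 : ℝ)) : Prop :=
  ∃ s ∈ F, ∃ j : Fin d, ε < dist (x s j) (y s j)

/-!
Let `A` be the integer matrix of `f_F`, acting on `ℤ^{F × d}`; only `det A ≠ 0` has content.
The homomorphism `y ↦ A⁻¹ y mod 1` from `ℤ^{F × d}` to the torus has kernel `A ℤ^{F × d}`, so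
its image has `|det A|` points. Extended by zero off `F`, each of them solves the row equations
on `F`, since `A (A⁻¹ y) = y` is integral. If two image points are coordinatewise `ε`-close, their
difference lifts to `m + w` with `m` integral and `|w| ≤ ε`; then `A w` is an integer vector of
sup norm at most `‖f‖₁ ε = 1/2`, hence zero, and the two points coincide. So the image is an
`ε`-separated subset of `X_{J,F}` with `|det A| ≥ det f_F` elements.
-/

lemma Finset.sum_le_finsum {α M : Type*} [AddCommMonoid M] [PartialOrder M] [IsOrderedAddMonoid M]
    {g : α → M} (hg : (Function.support g).Finite) (h0 : ∀ a, 0 ≤ g a) (s : Finset α) :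
    ∑ a ∈ s, g a ≤ ∑ᶠ a, g a := by
  classical
  rw [finsum_eq_sum_of_support_subset g (s := s ∪ hg.toFinset) (by simp)]
  exact Finset.sum_le_sum_of_subset_of_nonneg Finset.subset_union_left fun a _ _ => h0 a

open scoped NNReal in
lemma Metric.exists_card_le_of_pairwise_lt_dist {X : Type*} [PseudoMetricSpace X] [CompactSpace X]
    {ε : ℝ} (hε : 0 < ε) :
    ∃ N : ℕ, ∀ W : Finset X, (W : Set X).Pairwise (fun x y => ε < dist x y) → W.card ≤ N := by
  set δ : ℝ≥0 := (ε / 2).toNNReal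
  have h2δ : ((2 * δ : ℝ≥0) : ℝ) = ε := by
    rw [NNReal.coe_mul, Real.coe_toNNReal _ (by positivity)]; push_cast; ring
  obtain ⟨C, -, hCfin, hC⟩ := exists_finite_isCover_of_isCompact (s := (Set.univ : Set X))
    (Real.toNNReal_pos.mpr (half_pos hε)).ne' isCompact_univ
  refine ⟨C.encard.toNat, fun W hW => ?_⟩
  have hsep : IsSeparated (2 * δ : ℝ≥0) (W : Set X) := hW.imp fun x y hxy => by
    rw [edist_dist, ← ENNReal.ofReal_coe_nnreal, h2δ]
    exact (ENNReal.ofReal_lt_ofReal_iff_of_nonneg hε.le).mpr hxy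
  have := (hsep.encard_le_packingNumber (Set.subset_univ _)).trans <|
    (packingNumber_two_mul_le_externalCoveringNumber δ _).trans hC.externalCoveringNumber_le_encard
  rw [Set.encard_coe_eq_coe_finsetCard] at this
  simpa using ENat.toNat_le_toNat this hCfin.encard_lt_top.ne

lemma natCard_le_sepCount {P Q : Type*} [Finite Q] {Z : Set P} {sep : P → P → Prop}
    (hbdd : ∃ N, ∀ W : Finset P, (∀ x ∈ W, ∀ y ∈ W, x ≠ y → sep x y) → W.card ≤ N)
    {φ : Q → P} (hφ : Function.Injective φ) (hZ : ∀ q, φ q ∈ Z)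
    (hsep : Pairwise fun q q' => sep (φ q) (φ q')) :
    Nat.card Q ≤ sepCount Z sep := by
  have := Fintype.ofFinite Q
  obtain ⟨N, hN⟩ := hbdd
  refine le_csSup ⟨N, ?_⟩ ⟨Finset.univ.map ⟨φ, hφ⟩, ?_, ?_, by simp⟩
  · rintro n ⟨W, -, hW, rfl⟩
    exact hN W hW
  · simpa [Set.subset_def] using hZ
  · simp only [Finset.mem_map, Finset.mem_univ, true_and, Function.Embedding.coeFn_mk]
    rintro _ ⟨q, rfl⟩ _ ⟨q', rfl⟩ hne
    exact hsep fun h => hne (congrArg φ h)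

namespace Matrix

variable {ι : Type*} [Fintype ι]

lemma mulVec_map_intCast (A : Matrix ι ι ℤ) (m : ι → ℤ) :
    A.map ((↑) : ℤ → ℝ) *ᵥ (fun j => (m j : ℝ)) = fun i => ((A *ᵥ m) i : ℝ) := by
  ext i
  simp [mulVec, dotProduct]

variable [DecidableEq ι]

lemma natCard_quotient_range_mulVecLin {A : Matrix ι ι ℤ} (hA : A.det ≠ 0) :
    Nat.card ((ι → ℤ) ⧸ LinearMap.range A.mulVecLin) = A.det.natAbs := by
  have hinj : Function.Injective A.mulVecLin := fun v w h =>
    sub_eq_zero.mp (eq_zero_of_mulVec_eq_zero hA (by simpa [mulVec_sub, sub_eq_zero] using h))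
  rw [← (LinearMap.range A.mulVecLin).natAbs_det_equiv
    (LinearEquiv.ofInjective A.mulVecLin hinj).toAddEquiv, ← LinearMap.det_toLin']
  rfl

lemma isUnit_det_map_intCast {A : Matrix ι ι ℤ} (hA : A.det ≠ 0) :
    IsUnit (A.map ((↑) : ℤ → ℝ)).det := by
  rw [← Int.cast_det, isUnit_iff_ne_zero]
  exact_mod_cast hA

noncomputable def invMulVecModOne (A : Matrix ι ι ℤ) : (ι → ℤ) →+ (ι → AddCircle (1 : ℝ)) where
  toFun y i := (((A.map ((↑) : ℤ → ℝ))⁻¹ *ᵥ fun j => (y j : ℝ)) i : ℝ)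
  map_zero' := by ext; simp [← Pi.zero_def]
  map_add' y y' := by ext; simp [← Pi.add_def, mulVec_add]

lemma invMulVecModOne_apply (A : Matrix ι ι ℤ) (y : ι → ℤ) (i : ι) :
    A.invMulVecModOne y i = (((A.map ((↑) : ℤ → ℝ))⁻¹ *ᵥ fun j => (y j : ℝ)) i : ℝ) := rfl

lemma ker_invMulVecModOne {A : Matrix ι ι ℤ} (hA : A.det ≠ 0) :
    A.invMulVecModOne.ker = (LinearMap.range A.mulVecLin).toAddSubgroup := by
  ext y
  set B := A.map ((↑) : ℤ → ℝ)
  have hB := isUnit_det_map_intCast hA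
  simp only [AddMonoidHom.mem_ker, Submodule.mem_toAddSubgroup, LinearMap.mem_range,
    mulVecLin_apply]
  constructor
  · intro h
    have hint : ∀ i, ∃ n : ℤ, (n : ℝ) = (B⁻¹ *ᵥ fun j => (y j : ℝ)) i := fun i => by
      simpa using (AddCircle.coe_eq_zero_iff _).mp (congrFun h i)
    choose m hm using hint
    refine ⟨m, ?_⟩
    have : B *ᵥ (fun j => (m j : ℝ)) = fun j => (y j : ℝ) := by
      rw [show (fun j => (m j : ℝ)) = B⁻¹ *ᵥ fun j => (y j : ℝ) from funext hm,
        mulVec_mulVec, mul_nonsing_inv _ hB, one_mulVec]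
    ext i
    exact_mod_cast congrFun ((mulVec_map_intCast A m).symm.trans this) i
  · rintro ⟨m, rfl⟩
    ext i
    rw [invMulVecModOne_apply, ← mulVec_map_intCast, mulVec_mulVec, nonsing_inv_mul _ hB,
      one_mulVec]
    exact (AddCircle.coe_eq_zero_iff _).mpr ⟨m i, by simp⟩

lemma natCard_range_invMulVecModOne {A : Matrix ι ι ℤ} (hA : A.det ≠ 0) :
    Nat.card A.invMulVecModOne.range = A.det.natAbs := by
  rw [← Nat.card_congr (QuotientAddGroup.quotientKerEquivRange _).toEquiv, ker_invMulVecModOne hA]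
  exact natCard_quotient_range_mulVecLin hA

lemma finite_range_invMulVecModOne {A : Matrix ι ι ℤ} (hA : A.det ≠ 0) :
    Finite A.invMulVecModOne.range :=
  Nat.finite_of_card_ne_zero <| by
    rw [natCard_range_invMulVecModOne hA]
    exact Int.natAbs_ne_zero.mpr hA

lemma sum_smul_invMulVecModOne {A : Matrix ι ι ℤ} (hA : A.det ≠ 0) (y : ι → ℤ) (i : ι) :
    ∑ j, A i j • A.invMulVecModOne y j = 0 := by
  set B := A.map ((↑) : ℤ → ℝ)
  set z := B⁻¹ *ᵥ fun j => (y j : ℝ)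
  have hBz : (B *ᵥ z) i = y i := by
    rw [mulVec_mulVec, mul_nonsing_inv _ (isUnit_det_map_intCast hA), one_mulVec]
  calc ∑ j, A i j • A.invMulVecModOne y j
      = QuotientAddGroup.mk' (AddSubgroup.zmultiples (1 : ℝ)) (∑ j, A i j • z j) := by
        simp only [map_sum, map_zsmul]; rfl
    _ = ((y i : ℝ) : AddCircle (1 : ℝ)) := by
        rw [← hBz]; simp [mulVec, dotProduct, B, zsmul_eq_mul]
    _ = 0 := (AddCircle.coe_eq_zero_iff _).mpr ⟨y i, by simp⟩

lemma invMulVecModOne_eq_zero_of_norm_le {A : Matrix ι ι ℤ} (hA : A.det ≠ 0) {ε : ℝ}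
    (hrow : ∀ i, (∑ j, |(A i j : ℝ)|) * ε < 1) {y : ι → ℤ}
    (hy : ∀ i, ‖A.invMulVecModOne y i‖ ≤ ε) : A.invMulVecModOne y = 0 := by
  set B := A.map ((↑) : ℤ → ℝ)
  set z := B⁻¹ *ᵥ fun j => (y j : ℝ)
  set m : ι → ℤ := fun i => round (z i)
  set w : ι → ℝ := fun i => z i - m i
  have hw : ∀ j, |w j| ≤ ε := fun j => by
    have := hy j
    rwa [invMulVecModOne_apply, AddCircle.norm_eq, inv_one, one_mul, mul_one] at this
  have hBw : ∀ i, (B *ᵥ w) i = ((y - A *ᵥ m) i : ℤ) := fun i => by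
    have hw' : w = z - fun j => (m j : ℝ) := rfl
    rw [hw', mulVec_sub, mulVec_mulVec, mul_nonsing_inv _ (isUnit_det_map_intCast hA),
      one_mulVec, mulVec_map_intCast]
    simp
  have hsmall : ∀ i, |((y - A *ᵥ m) i : ℝ)| < 1 := fun i => by
    rw [← hBw]
    calc |(B *ᵥ w) i| ≤ ∑ j, |B i j| * |w j| := by
          simpa only [mulVec, dotProduct, abs_mul] using
            Finset.abs_sum_le_sum_abs (fun j => B i j * w j) Finset.univ
      _ ≤ ∑ j, |B i j| * ε := by gcongr with j; exact hw j
      _ = (∑ j, |(A i j : ℝ)|) * ε := by rw [Finset.sum_mul]; rfl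
      _ < 1 := hrow i
  have hym : y = A *ᵥ m := by
    ext i
    have := hsmall i
    rwa [← Int.cast_abs, ← Int.cast_one, Int.cast_lt, Int.abs_lt_one_iff, Pi.sub_apply,
      sub_eq_zero] at this
  rw [← AddMonoidHom.mem_ker, ker_invMulVecModOne hA, hym]
  exact ⟨m, rfl⟩

lemma exists_lt_dist_of_mem_range_invMulVecModOne
    {A : Matrix ι ι ℤ} (hA : A.det ≠ 0) {ε : ℝ} (hrow : ∀ i, (∑ j, |(A i j : ℝ)|) * ε < 1)
    {x x' : ι → AddCircle (1 : ℝ)} (hx : x ∈ A.invMulVecModOne.range)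
    (hx' : x' ∈ A.invMulVecModOne.range) (hne : x ≠ x') : ∃ i, ε < dist (x i) (x' i) := by
  obtain ⟨y, rfl⟩ := hx
  obtain ⟨y', rfl⟩ := hx'
  by_contra! hle
  refine hne (sub_eq_zero.mp ?_)
  rw [← map_sub]
  exact invMulVecModOne_eq_zero_of_norm_le hA hrow fun i => by
    simpa [← dist_eq_norm] using hle i

end Matrix

section GroupRing

variable {Γ : Type*} {d : ℕ} {f : Γ → Matrix (Fin d) (Fin d) ℤ} {F : Finset Γ}

lemma finsum_abs_pos (hf : (Function.support f).Finite) {s : Γ} {i j : Fin d}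
    (hs : f s i j ≠ 0) : 0 < ∑ᶠ s : Γ, ∑ i : Fin d, ∑ j : Fin d, (|f s i j| : ℝ) := by
  set N : Γ → ℝ := fun s => ∑ i : Fin d, ∑ j : Fin d, (|f s i j| : ℝ)
  have hN : (Function.support N).Finite := hf.subset fun s hs h0 => hs (by simp [N, h0])
  calc (0 : ℝ) < |(f s i j : ℝ)| := by positivity
    _ ≤ N s := by
        refine (Finset.single_le_sum (f := fun j => (|f s i j| : ℝ)) (fun _ _ => by positivity)
          (Finset.mem_univ j)).trans ?_
        exact Finset.single_le_sum (f := fun i => ∑ j, (|f s i j| : ℝ))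
          (fun _ _ => by positivity) (Finset.mem_univ i)
    _ ≤ ∑ᶠ s, N s := single_le_finsum s hN fun _ => by positivity

section ExtendByZero

variable [DecidableEq Γ]

def extendByZero {M : Type*} [Zero M] (F : Finset Γ) (x : {a // a ∈ F} × Fin d → M) :
    Γ → Fin d → M :=
  fun t j => if h : t ∈ F then x (⟨t, h⟩, j) else 0

lemma extendByZero_injective {M : Type*} [Zero M] (F : Finset Γ) :
    Function.Injective (extendByZero (d := d) (M := M) F) := fun x x' h => by
  ext ⟨⟨t, ht⟩, j⟩
  simpa [extendByZero, ht] using congrFun (congrFun h t) j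

end ExtendByZero

variable [Group Γ]

def compressionMatrix (f : Γ → Matrix (Fin d) (Fin d) ℤ) (F : Finset Γ) :
    Matrix ({a // a ∈ F} × Fin d) ({a // a ∈ F} × Fin d) ℤ :=
  Matrix.of fun p q => f (p.1.1 * q.1.1⁻¹) p.2 q.2

lemma sum_abs_compressionMatrix_le (hf : (Function.support f).Finite) {t : Γ}
    (ht : t ∈ F) (i : Fin d) :
    ∑ q, |(compressionMatrix f F (⟨t, ht⟩, i) q : ℝ)| ≤
      ∑ᶠ s : Γ, ∑ i : Fin d, ∑ j : Fin d, (|f s i j| : ℝ) := by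
  classical
  set N : Γ → ℝ := fun s => ∑ i : Fin d, ∑ j : Fin d, (|f s i j| : ℝ)
  have hN : (Function.support N).Finite := hf.subset fun s hs h0 => hs (by simp [N, h0])
  calc ∑ q, |(compressionMatrix f F (⟨t, ht⟩, i) q : ℝ)|
      = ∑ u : {a // a ∈ F}, ∑ j, (|f (t * u.1⁻¹) i j| : ℝ) := by
        rw [Fintype.sum_prod_type]; rfl
    _ ≤ ∑ u : {a // a ∈ F}, N (t * u.1⁻¹) := by
        gcongr with u
        exact Finset.single_le_sum (f := fun i => ∑ j, (|f (t * u.1⁻¹) i j| : ℝ))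
          (fun _ _ => by positivity) (Finset.mem_univ i)
    _ = ∑ s ∈ F.image (t * ·⁻¹), N s := by
        rw [Finset.sum_image (by simp)]
        exact Finset.sum_coe_sort F fun u => N (t * u⁻¹)
    _ ≤ ∑ᶠ s, N s := Finset.sum_le_finsum hN (fun s => by positivity) _

lemma exists_card_le_of_thetaInfSep {ε : ℝ} (hε : 0 < ε) (F : Finset Γ) :
    ∃ N, ∀ W : Finset (Γ → Fin d → AddCircle (1 : ℝ)),
      (∀ x ∈ W, ∀ y ∈ W, x ≠ y → thetaInfSep ε F x y) → W.card ≤ N := by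
  classical
  have : Fact ((0 : ℝ) < 1) := ⟨one_pos⟩
  obtain ⟨N, hN⟩ := Metric.exists_card_le_of_pairwise_lt_dist
    (X := {a // a ∈ F} × Fin d → AddCircle (1 : ℝ)) hε
  let ρ : (Γ → Fin d → AddCircle (1 : ℝ)) → {a // a ∈ F} × Fin d → AddCircle (1 : ℝ) :=
    fun x p => x p.1 p.2
  refine ⟨N, fun W hW => ?_⟩
  have hρ : ∀ x ∈ W, ∀ y ∈ W, x ≠ y → ε < dist (ρ x) (ρ y) := fun x hx y hy hne => by
    obtain ⟨s, hs, j, hlt⟩ := hW x hx y hy hne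
    exact hlt.trans_le (dist_le_pi_dist (ρ x) (ρ y) (⟨s, hs⟩, j))
  have hinj : Set.InjOn ρ W := fun x hx y hy hxy => by
    by_contra hne
    have := hρ x hx y hy hne
    rw [hxy, dist_self] at this
    exact hε.not_gt this
  rw [← Finset.card_image_of_injOn hinj]
  refine hN _ ?_
  simp only [Finset.coe_image]
  rintro _ ⟨x, hx, rfl⟩ _ ⟨y, hy, rfl⟩ hne
  exact hρ x hx y hy fun h => hne (congrArg ρ h)

variable [DecidableEq Γ]

lemma det_intCompression (f : Γ → Matrix (Fin d) (Fin d) ℤ) (F : Finset Γ) :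
    (intCompression f F).det = (compressionMatrix f F).det := by
  rw [Int.cast_det]
  rfl

lemma finsum_abs_pos_of_det_compressionMatrix_ne_zero (hf : (Function.support f).Finite)
    (hd : 1 ≤ d) (hF : F.Nonempty) (hA : (compressionMatrix f F).det ≠ 0) :
    0 < ∑ᶠ s : Γ, ∑ i : Fin d, ∑ j : Fin d, (|f s i j| : ℝ) := by
  obtain ⟨p, q, hpq⟩ : ∃ p q, compressionMatrix f F p q ≠ 0 := by
    by_contra! h
    have : Nonempty ({a // a ∈ F} × Fin d) := ⟨(⟨_, hF.choose_spec⟩, ⟨0, hd⟩)⟩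
    exact hA (by rw [show compressionMatrix f F = 0 from Matrix.ext h, det_zero])
  exact finsum_abs_pos hf hpq

lemma finsum_smul_extendByZero {M : Type*} [AddCommGroup M]
    (f : Γ → Matrix (Fin d) (Fin d) ℤ) (x : {a // a ∈ F} × Fin d → M) {t : Γ}
    (ht : t ∈ F) (i : Fin d) :
    ∑ᶠ s, ∑ j, f s i j • extendByZero F x (s⁻¹ * t) j =
      ∑ q, compressionMatrix f F (⟨t, ht⟩, i) q • x q := by
  rw [← finsum_comp_equiv ((Equiv.inv Γ).trans (Equiv.mulLeft t))]
  simp only [Equiv.trans_apply, Equiv.inv_apply, Equiv.coe_mulLeft, _root_.mul_inv_rev, inv_inv,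
    inv_mul_cancel_right]
  have hsupp : (Function.support fun u => ∑ j, f (t * u⁻¹) i j • extendByZero F x u j) ⊆ F :=
    fun u hu => by
      by_contra hu'
      exact hu (by simp [extendByZero, show u ∉ F from hu'])
  rw [finsum_eq_sum_of_support_subset _ hsupp, ← Finset.sum_attach, Fintype.sum_prod_type]
  simp [extendByZero, compressionMatrix]

lemma extendByZero_mem_XrowsF {x : {a // a ∈ F} × Fin d → AddCircle (1 : ℝ)}
    (hx : ∀ p, ∑ q, compressionMatrix f F p q • x q = 0) : extendByZero F x ∈ XrowsF f F :=
  fun i _ ht => (finsum_smul_extendByZero f x ht i).trans (hx _)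

lemma thetaInfSep_extendByZero {ε : ℝ} {x x' : {a // a ∈ F} × Fin d → AddCircle (1 : ℝ)}
    (h : ∃ p, ε < dist (x p) (x' p)) : thetaInfSep ε F (extendByZero F x) (extendByZero F x') := by
  obtain ⟨⟨⟨s, hs⟩, j⟩, hlt⟩ := h
  exact ⟨s, hs, j, by simpa [extendByZero, hs] using hlt⟩

end GroupRing

theorem det_compression_le_sepCount_general
    {Γ : Type*} [Group Γ] [DecidableEq Γ]
    (d : ℕ) (hd : 1 ≤ d)
    (f : Γ → Matrix (Fin d) (Fin d) ℤ) (hffin : (Function.support f).Finite)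
    (F : Finset Γ) (hF : F.Nonempty) :
    (intCompression f F).det.re ≤
      ((sepCount (XrowsF f F)
          (thetaInfSep (1 / (2 * ∑ᶠ s : Γ, ∑ i : Fin d, ∑ j : Fin d, (|f s i j| : ℝ))) F)
        : ℕ) : ℝ) := by
  set L := ∑ᶠ s : Γ, ∑ i : Fin d, ∑ j : Fin d, (|f s i j| : ℝ)
  set A := compressionMatrix f F
  rw [det_intCompression, Complex.intCast_re]
  rcases eq_or_ne A.det 0 with hA | hA
  · rw [hA, Int.cast_zero]
    positivity
  have hL : 0 < L := finsum_abs_pos_of_det_compressionMatrix_ne_zero hffin hd hF hA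
  have hrow : ∀ p, (∑ q, |(A p q : ℝ)|) * (1 / (2 * L)) < 1 := fun ⟨⟨t, ht⟩, i⟩ =>
    calc (∑ q, |(A (⟨t, ht⟩, i) q : ℝ)|) * (1 / (2 * L)) ≤ L * (1 / (2 * L)) := by
          gcongr; exact sum_abs_compressionMatrix_le hffin ht i
      _ < 1 := by field_simp; norm_num
  have := Matrix.finite_range_invMulVecModOne hA
  calc (A.det : ℝ) ≤ A.det.natAbs := by rw [Nat.cast_natAbs]; exact_mod_cast le_abs_self _
    _ = Nat.card A.invMulVecModOne.range := by rw [natCard_range_invMulVecModOne hA]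
    _ ≤ _ := by
      exact_mod_cast natCard_le_sepCount (exists_card_le_of_thetaInfSep (by positivity) F)
        (φ := fun x : A.invMulVecModOne.range => extendByZero F x.1)
        ((extendByZero_injective F).comp Subtype.val_injective)
        (fun ⟨_, y, rfl⟩ => extendByZero_mem_XrowsF (Matrix.sum_smul_invMulVecModOne hA y))
        (fun x x' hne => thetaInfSep_extendByZero
          (Matrix.exists_lt_dist_of_mem_range_invMulVecModOne hA hrow x.2 x'.2
            (Subtype.coe_injective.ne hne)))

/-- **Lemma 4.10 (lower bound for separation numbers of approximate solutions).**
Let `f ∈ M_d(ℤΓ)` be self-adjoint with all compressions positive definite, let `J` be the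
set of rows of `f`, and set `ε = 1/(2‖f‖₁)`.  Then for every nonempty finite `F ⊆ Γ` one
has `N_ε(X_{J,F}, ϑ_{F,∞}) ≥ det (f_F)`. -/
theorem det_compression_le_sepCount
    {Γ : Type*} [Group Γ] [Countable Γ] [DecidableEq Γ]
    (d : ℕ) (hd : 1 ≤ d)
    (f : Γ → Matrix (Fin d) (Fin d) ℤ) (hffin : (Function.support f).Finite)
    (hsa : ∀ s : Γ, f s⁻¹ = (f s)ᵀ)
    (hpos : ∀ F' : Finset Γ, F'.Nonempty → (intCompression f F').PosDef)
    (F : Finset Γ) (hF : F.Nonempty) :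
    (intCompression f F).det.re ≤
      ((sepCount (XrowsF f F)
          (thetaInfSep (1 / (2 * ∑ᶠ s : Γ, ∑ i : Fin d, ∑ j : Fin d, (|f s i j| : ℝ))) F)
        : ℕ) : ℝ) :=
  det_compression_le_sepCount_general d hd f hffin F hF
end

section
/- Let Γ be a countable discrete group, d, d' ≥ 1, and f ∈ M_{d'×d}(ℤΓ). Let M_J ⊆ (ℤΓ)^{1×d'} be the left ℤΓ-submodule generated by the rows of f* together with all g ∈ (ℤΓ)^{1×d'} satisfying gf = 0. Then the sequence of left ℤΓ-modules 0 → (ℤΓ)^{1×d'}/M_J → (ℤΓ)^{1×d}/(ℤΓ)^{1×d}(f*f) → (ℤΓ)^{1×d}/(ℤΓ)^{1×d'}f → 0 is exact, where the first map is induced by right multiplication by f and the second map is the natural quotient map (note (ℤΓ)^{1×d}(f*f) ⊆ (ℤΓ)^{1×d'}f). -/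
/-- The canonical involution on the integral group ring `ℤΓ`:
`(Σ_s a_s s)* = Σ_s a_s s⁻¹`. -/
noncomputable def grpRingStar {Γ : Type*} [Group Γ] (a : MonoidAlgebra ℤ Γ) :
    MonoidAlgebra ℤ Γ :=
  MonoidAlgebra.ofCoeff (Finsupp.mapDomain (fun s => s⁻¹) a.coeff)

/-- The adjoint `f* ∈ M_{d×d'}(ℤΓ)` of a matrix `f ∈ M_{d'×d}(ℤΓ)`,
defined by `(f*)_s = (f_{s⁻¹})ᵀ`. -/
noncomputable def matStar {Γ : Type*} [Group Γ] {d' d : ℕ}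
    (f : Matrix (Fin d') (Fin d) (MonoidAlgebra ℤ Γ)) :
    Matrix (Fin d) (Fin d') (MonoidAlgebra ℤ Γ) :=
  Matrix.of fun i j => grpRingStar (f j i)

/-!
For any ring `R` and matrices `A`, `f`, the submodule spanned by the rows of `A` and the kernel
of `g ↦ g f` is the preimage under `g ↦ g f` of the row space of `A f`, because that row space is
the image of the row space of `A` and `comap φ (map φ p) = p ⊔ ker φ`. This equality is both the
well-definedness and the injectivity of the first map; exactness in the middle holds because the
row space of `A f` lies in that of `f`.
-/

namespace Matrix

open Submodule

variable {R : Type*} [Ring R] {ι κ μ : Type*} [Fintype ι] [Fintype κ]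

theorem span_rows_union_ker_vecMul_eq_comap (A : Matrix ι κ R) (f : Matrix κ μ R) :
    span R (Set.range A ∪ {g | g ᵥ* f = 0}) =
      (LinearMap.range (A * f).vecMulLinear).comap f.vecMulLinear := by
  have hcomp : (A * f).vecMulLinear = f.vecMulLinear ∘ₗ A.vecMulLinear :=
    LinearMap.ext fun v => (vecMul_vecMul v A f).symm
  have hker : span R {g : κ → R | g ᵥ* f = 0} = LinearMap.ker f.vecMulLinear :=
    span_eq (LinearMap.ker f.vecMulLinear)
  rw [hcomp, LinearMap.range_comp, comap_map_eq, range_vecMulLinear, span_union, hker]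
  rfl

theorem mem_span_rows_union_ker_vecMul_iff (A : Matrix ι κ R) (f : Matrix κ μ R)
    (g : κ → R) :
    g ∈ span R (Set.range A ∪ {g | g ᵥ* f = 0}) ↔ ∃ z : ι → R, g ᵥ* f = z ᵥ* (A * f) := by
  rw [span_rows_union_ker_vecMul_eq_comap]
  exact ⟨fun ⟨z, hz⟩ => ⟨z, hz.symm⟩, fun ⟨z, hz⟩ => ⟨z, hz.symm⟩⟩

theorem exists_vecMul_eq_iff_exists_sub_vecMul_eq_vecMul_mul (A : Matrix ι κ R)
    (f : Matrix κ μ R) (y : μ → R) :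
    (∃ w : κ → R, y = w ᵥ* f) ↔ ∃ (g : κ → R) (z : ι → R), y - g ᵥ* f = z ᵥ* (A * f) := by
  constructor
  · rintro ⟨w, rfl⟩
    exact ⟨w, 0, by rw [sub_self, zero_vecMul]⟩
  · rintro ⟨g, z, hz⟩
    refine ⟨g + z ᵥ* A, ?_⟩
    rw [add_vecMul, vecMul_vecMul, ← hz, add_sub_cancel]

end Matrix

/-- Exactness is expressed elementwise: (1) the first map is well defined, (2) it is injective,
and (3) the image of the first map coincides with the kernel of the second. -/
theorem exact_sequence_of_fstar_f_general {Γ : Type*} [Group Γ]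
    (d' d : ℕ)
    (f : Matrix (Fin d') (Fin d) (MonoidAlgebra ℤ Γ)) :
    (∀ g ∈ Submodule.span (MonoidAlgebra ℤ Γ)
        ((Set.range fun i : Fin d => fun j : Fin d' => matStar f i j) ∪
          {g : Fin d' → MonoidAlgebra ℤ Γ | Matrix.vecMul g f = 0}),
      ∃ z : Fin d → MonoidAlgebra ℤ Γ,
        Matrix.vecMul g f = Matrix.vecMul z (matStar f * f)) ∧
    (∀ g : Fin d' → MonoidAlgebra ℤ Γ,
      (∃ z : Fin d → MonoidAlgebra ℤ Γ,
        Matrix.vecMul g f = Matrix.vecMul z (matStar f * f)) →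
      g ∈ Submodule.span (MonoidAlgebra ℤ Γ)
        ((Set.range fun i : Fin d => fun j : Fin d' => matStar f i j) ∪
          {g : Fin d' → MonoidAlgebra ℤ Γ | Matrix.vecMul g f = 0})) ∧
    (∀ y : Fin d → MonoidAlgebra ℤ Γ,
      (∃ w : Fin d' → MonoidAlgebra ℤ Γ, y = Matrix.vecMul w f) ↔
      (∃ (g : Fin d' → MonoidAlgebra ℤ Γ) (z : Fin d → MonoidAlgebra ℤ Γ),
        y - Matrix.vecMul g f = Matrix.vecMul z (matStar f * f))) :=
  ⟨fun g => (Matrix.mem_span_rows_union_ker_vecMul_iff (matStar f) f g).1,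
    fun g => (Matrix.mem_span_rows_union_ker_vecMul_iff (matStar f) f g).2,
    Matrix.exists_vecMul_eq_iff_exists_sub_vecMul_eq_vecMul_mul (matStar f) f⟩

/-- **Lemma 4.12 (an exact sequence of left `ℤΓ`-modules).**
For `f ∈ M_{d'×d}(ℤΓ)`, let `M_J ⊆ (ℤΓ)^{1×d'}` be the left submodule generated by the rows
of `f*` together with all `g` with `g f = 0`.  Then the sequence
`0 → (ℤΓ)^{1×d'}/M_J → (ℤΓ)^{1×d}/(ℤΓ)^{1×d}(f*f) → (ℤΓ)^{1×d}/(ℤΓ)^{1×d'}f → 0`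
is exact, where the first map is induced by right multiplication by `f` and the second map
is the natural quotient map.  Exactness is expressed elementwise:
(1) the first map is well defined, (2) it is injective, and (3) the image of the first map
coincides with the kernel of the second. -/
theorem exact_sequence_of_fstar_f {Γ : Type*} [Group Γ] [Countable Γ]
    (d' d : ℕ) (hd' : 1 ≤ d') (hd : 1 ≤ d)
    (f : Matrix (Fin d') (Fin d) (MonoidAlgebra ℤ Γ)) :
    (∀ g ∈ Submodule.span (MonoidAlgebra ℤ Γ)
        ((Set.range fun i : Fin d => fun j : Fin d' => matStar f i j) ∪
          {g : Fin d' → MonoidAlgebra ℤ Γ | Matrix.vecMul g f = 0}),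
      ∃ z : Fin d → MonoidAlgebra ℤ Γ,
        Matrix.vecMul g f = Matrix.vecMul z (matStar f * f)) ∧
    (∀ g : Fin d' → MonoidAlgebra ℤ Γ,
      (∃ z : Fin d → MonoidAlgebra ℤ Γ,
        Matrix.vecMul g f = Matrix.vecMul z (matStar f * f)) →
      g ∈ Submodule.span (MonoidAlgebra ℤ Γ)
        ((Set.range fun i : Fin d => fun j : Fin d' => matStar f i j) ∪
          {g : Fin d' → MonoidAlgebra ℤ Γ | Matrix.vecMul g f = 0})) ∧
    (∀ y : Fin d → MonoidAlgebra ℤ Γ,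
      (∃ w : Fin d' → MonoidAlgebra ℤ Γ, y = Matrix.vecMul w f) ↔
      (∃ (g : Fin d' → MonoidAlgebra ℤ Γ) (z : Fin d → MonoidAlgebra ℤ Γ),
        y - Matrix.vecMul g f = Matrix.vecMul z (matStar f * f))) :=
  exact_sequence_of_fstar_f_general d' d f
end

section
/- Let Γ be a countable discrete group, let d₋, d, d₊ ≥ 0, and let f ∈ M_{d×d₋}(ℤΓ) and h ∈ M_{d₊×d}(ℤΓ) be such that {y ∈ (ℤΓ)^{1×d} : yf = 0} = {zh : z ∈ (ℤΓ)^{1×d₊}} (exactness at degree d). Then right multiplication by the matrix h*h + ff* ∈ M_d(ℤΓ) on (ℤΓ)^{1×d} is injective: if y ∈ (ℤΓ)^{1×d} satisfies y(h*h + ff*) = 0, then y = 0. -/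
/-!
Equip `ℤΓ` with the involution `a ↦ a*`, so that `matStar` is the conjugate transpose. The
trace `τ(a) = a(1)` makes `τ(v · w*)` a positive definite form on `(ℤΓ)^d`, since
`τ(v · v*) = Σᵢ Σₛ vᵢ(s)²`, and right multiplication by `g*` is adjoint to right multiplication
by `g`. Pairing `y(h*h + ff*) = 0` with `y` gives `τ(u · u*) + τ(w · w*) = 0` for `u = yh*`,
`w = yf`, hence `u = w = 0`. Exactness then writes `y = zh`, and `τ(y · y*) = τ(z · u*) = 0`.
-/

open scoped Matrix

namespace MonoidAlgebra

variable {Γ : Type*} [Group Γ]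

lemma coeff_grpRingStar (a : MonoidAlgebra ℤ Γ) (x : Γ) :
    (grpRingStar a).coeff x = a.coeff x⁻¹ := by
  rw [grpRingStar, coeff_ofCoeff, ← Finsupp.mapDomain_apply inv_injective a.coeff x⁻¹, inv_inv]

lemma grpRingStar_zero : grpRingStar (0 : MonoidAlgebra ℤ Γ) = 0 :=
  congrArg ofCoeff Finsupp.mapDomain_zero

lemma grpRingStar_add (a b : MonoidAlgebra ℤ Γ) :
    grpRingStar (a + b) = grpRingStar a + grpRingStar b :=
  congrArg ofCoeff Finsupp.mapDomain_add

lemma grpRingStar_single (x : Γ) (r : ℤ) : grpRingStar (single x r) = single x⁻¹ r :=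
  congrArg ofCoeff Finsupp.mapDomain_single

lemma grpRingStar_grpRingStar (a : MonoidAlgebra ℤ Γ) : grpRingStar (grpRingStar a) = a := by
  ext x
  rw [coeff_grpRingStar, coeff_grpRingStar, inv_inv]

lemma grpRingStar_mul (a b : MonoidAlgebra ℤ Γ) :
    grpRingStar (a * b) = grpRingStar b * grpRingStar a := by
  induction a using induction_linear with
  | zero => rw [zero_mul, grpRingStar_zero, mul_zero]
  | add p q hp hq => rw [add_mul, grpRingStar_add, hp, hq, grpRingStar_add, mul_add]
  | single x r =>
    induction b using induction_linear with
    | zero => rw [mul_zero, grpRingStar_zero, zero_mul]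
    | add p q hp hq => rw [mul_add, grpRingStar_add, hp, hq, grpRingStar_add, add_mul]
    | single y s =>
      simp only [single_mul_single, grpRingStar_single, mul_inv_rev, mul_comm r s]

noncomputable instance : StarRing (MonoidAlgebra ℤ Γ) where
  star := grpRingStar
  star_involutive := grpRingStar_grpRingStar
  star_mul := grpRingStar_mul
  star_add := grpRingStar_add

lemma matStar_eq_conjTranspose {m n : ℕ} (g : Matrix (Fin m) (Fin n) (MonoidAlgebra ℤ Γ)) :
    matStar g = gᴴ :=
  rfl

lemma coeff_one_mul_star_self (a : MonoidAlgebra ℤ Γ) :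
    (a * star a).coeff 1 = ∑ s ∈ a.coeff.support, a.coeff s ^ 2 := by
  rw [coeff_mul_apply_left, Finsupp.sum]
  refine Finset.sum_congr rfl fun s _ => ?_
  rw [show star a = grpRingStar a from rfl, coeff_grpRingStar, mul_one, inv_inv, sq]

lemma coeff_one_mul_star_self_nonneg (a : MonoidAlgebra ℤ Γ) : 0 ≤ (a * star a).coeff 1 := by
  rw [coeff_one_mul_star_self]
  positivity

lemma eq_zero_of_coeff_one_mul_star_self_eq_zero {a : MonoidAlgebra ℤ Γ}
    (ha : (a * star a).coeff 1 = 0) : a = 0 := by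
  rw [coeff_one_mul_star_self, Finset.sum_eq_zero_iff_of_nonneg fun s _ => sq_nonneg _] at ha
  rw [← coeff_eq_zero, ← Finsupp.support_eq_empty, Finset.eq_empty_iff_forall_notMem]
  exact fun s hs => Finsupp.mem_support_iff.mp hs (pow_eq_zero_iff two_ne_zero |>.mp (ha s hs))

variable {n : Type*} [Fintype n]

lemma coeff_one_dotProduct_star_self (v : n → MonoidAlgebra ℤ Γ) :
    (v ⬝ᵥ star v).coeff 1 = ∑ i, (v i * star (v i)).coeff 1 := by
  rw [dotProduct, coeff_sum]
  simp only [Finsupp.coe_finsetSum, Finset.sum_apply, Pi.star_apply]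

lemma coeff_one_dotProduct_star_self_nonneg (v : n → MonoidAlgebra ℤ Γ) :
    0 ≤ (v ⬝ᵥ star v).coeff 1 := by
  rw [coeff_one_dotProduct_star_self]
  exact Finset.sum_nonneg fun i _ => coeff_one_mul_star_self_nonneg (v i)

lemma eq_zero_of_coeff_one_dotProduct_star_self_eq_zero {v : n → MonoidAlgebra ℤ Γ}
    (hv : (v ⬝ᵥ star v).coeff 1 = 0) : v = 0 := by
  rw [coeff_one_dotProduct_star_self,
    Finset.sum_eq_zero_iff_of_nonneg fun i _ => coeff_one_mul_star_self_nonneg (v i)] at hv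
  exact funext fun i => eq_zero_of_coeff_one_mul_star_self_eq_zero (hv i (Finset.mem_univ i))

lemma eq_zero_of_dotProduct_star_self_add_eq_zero {m : Type*} [Fintype m]
    {v : n → MonoidAlgebra ℤ Γ} {w : m → MonoidAlgebra ℤ Γ}
    (h : v ⬝ᵥ star v + w ⬝ᵥ star w = 0) : v = 0 ∧ w = 0 := by
  have hcoeff := congrArg (fun a : MonoidAlgebra ℤ Γ => a.coeff 1) h
  simp only [coeff_add, Finsupp.add_apply, coeff_zero, Finsupp.coe_zero, Pi.zero_apply] at hcoeff
  rw [add_eq_zero_iff_of_nonneg (coeff_one_dotProduct_star_self_nonneg v)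
    (coeff_one_dotProduct_star_self_nonneg w)] at hcoeff
  exact ⟨eq_zero_of_coeff_one_dotProduct_star_self_eq_zero hcoeff.1,
    eq_zero_of_coeff_one_dotProduct_star_self_eq_zero hcoeff.2⟩

end MonoidAlgebra

open Matrix MonoidAlgebra

lemma Matrix.vecMul_dotProduct_star {α m n : Type*} [NonUnitalSemiring α] [StarRing α]
    [Fintype m] [Fintype n] (g : Matrix m n α) (u : m → α) (y : n → α) :
    u ᵥ* g ⬝ᵥ star y = u ⬝ᵥ star (y ᵥ* gᴴ) := by
  rw [star_vecMul, conjTranspose_conjTranspose, dotProduct_mulVec]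

theorem laplacian_injective_general {Γ : Type*} [Group Γ]
    (dminus d dplus : ℕ)
    (f : Matrix (Fin d) (Fin dminus) (MonoidAlgebra ℤ Γ))
    (h : Matrix (Fin dplus) (Fin d) (MonoidAlgebra ℤ Γ))
    (hexact : ∀ y : Fin d → MonoidAlgebra ℤ Γ,
      Matrix.vecMul y f = 0 ↔ ∃ z : Fin dplus → MonoidAlgebra ℤ Γ, y = Matrix.vecMul z h) :
    ∀ y : Fin d → MonoidAlgebra ℤ Γ,
      Matrix.vecMul y (matStar h * h + f * matStar f) = 0 → y = 0 := by
  intro y hy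
  rw [matStar_eq_conjTranspose, matStar_eq_conjTranspose] at hy
  have hpair : (y ᵥ* hᴴ) ⬝ᵥ star (y ᵥ* hᴴ) + (y ᵥ* f) ⬝ᵥ star (y ᵥ* f) = 0 := by
    have := congrArg (· ⬝ᵥ star y) hy
    simpa only [vecMul_add, add_dotProduct, ← vecMul_vecMul, vecMul_dotProduct_star,
      conjTranspose_conjTranspose, zero_dotProduct] using this
  obtain ⟨hu, hw⟩ := eq_zero_of_dotProduct_star_self_add_eq_zero hpair
  obtain ⟨z, rfl⟩ := (hexact y).mp hw
  refine eq_zero_of_coeff_one_dotProduct_star_self_eq_zero ?_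
  rw [vecMul_dotProduct_star, hu, star_zero, dotProduct_zero, coeff_zero, Finsupp.coe_zero,
    Pi.zero_apply]

/-- **Injectivity of the combinatorial Laplacian (from Lemma 5.3).**
Let `Γ` be a countable discrete group, `f ∈ M_{d×d₋}(ℤΓ)` and `h ∈ M_{d₊×d}(ℤΓ)` with
`{y : y f = 0} = {z h : z}` (exactness at degree `d`).  Then right multiplication by
`h*h + f f*` on `(ℤΓ)^{1×d}` is injective. -/
theorem laplacian_injective {Γ : Type*} [Group Γ] [Countable Γ]
    (dminus d dplus : ℕ)
    (f : Matrix (Fin d) (Fin dminus) (MonoidAlgebra ℤ Γ))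
    (h : Matrix (Fin dplus) (Fin d) (MonoidAlgebra ℤ Γ))
    (hexact : ∀ y : Fin d → MonoidAlgebra ℤ Γ,
      Matrix.vecMul y f = 0 ↔ ∃ z : Fin dplus → MonoidAlgebra ℤ Γ, y = Matrix.vecMul z h) :
    ∀ y : Fin d → MonoidAlgebra ℤ Γ,
      Matrix.vecMul y (matStar h * h + f * matStar f) = 0 → y = 0 :=
  laplacian_injective_general dminus d dplus f h hexact
end

section
/- Let Γ be a countable discrete amenable group containing an element s₀ of infinite order such that the cyclic subgroup generated by s₀ has infinite index in Γ. Let (X, θ) be a compact metric space on which Γ acts by homeomorphisms such that for every s ∈ Γ there is a constant K_s ≥ 1 with θ(sx, sy) ≤ K_s·θ(x,y) for all x, y ∈ X. Assume there exist q ∈ ℕ and constants C₁, C₂ ≥ 1 such that for every δ' ∈ (0,1) there is a finite subset Z ⊆ X of cardinality at most C₂·(4/δ')^q with the property that every point of X is within distance C₁δ' of some point of Z. Then for every ε > 0 one has limsup_F (log N_ε(X, θ_{F,∞}))/|F| ≤ 0, where limsup_F denotes the limit superior as the nonempty finite subset F of Γ becomes more and more left invariant. -/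
/-- The limit superior of `ψ(F)` as the nonempty finite subset `F ⊆ Γ` becomes more and
more left invariant: `inf_{(K,δ)} sup_{F ∈ B(K,δ)} ψ(F)`. -/
noncomputable def limsupFolner {Γ : Type*} [Group Γ] [DecidableEq Γ]
    (ψ : Finset Γ → ℝ) : ℝ :=
  ⨅ p : {p : Finset Γ × ℝ // p.1.Nonempty ∧ 0 < p.2},
    ⨆ F : {F : Finset Γ // memApproxInv p.1.1 p.1.2 F}, ψ F.1

/-!
Greedily, a set `F` that is almost invariant under `K⁻¹` is covered, up to `2δ|F|` points, by
`|F| log(1/δ)/|K|` translates `K v`. A point `x` is then determined, up to `(ε, F)`-separation, by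
the fine-net points nearest to the `v • x` and the coarse-net points nearest to the remaining
`s • x`, so `log N_ε / |F| ≲ log(1/δ) log |fine net| / |K| + 2δ log |coarse net|`. The fine net
must be finer than the inverse Lipschitz constant `M` of `K`, so `log |fine net| ≈ q log M`. For
the blocks `K = {c s₀ⁱ}`, with `c` running over `m` representatives of distinct cosets of `⟨s₀⟩`
and `i < n`, one has `|K| = mn` while `log M = O(n)`; letting `m → ∞` and then `n → ∞` makes the
bound arbitrarily small.
-/

open Finset Real
open scoped Pointwise NNReal

theorem log_natCast_le_of_le_pow_mul_pow {n a b i j : ℕ} (h : n ≤ a ^ i * b ^ j) :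
    log n ≤ i * log a + j * log b := by
  rcases n.eq_zero_or_pos with rfl | hn
  · simp only [Nat.cast_zero, log_zero]
    have := log_natCast_nonneg a
    have := log_natCast_nonneg b
    positivity
  have ha : (a : ℝ) ^ i ≠ 0 := by exact_mod_cast (Nat.pos_of_mul_pos_right (hn.trans_le h)).ne'
  have hb : (b : ℝ) ^ j ≠ 0 := by exact_mod_cast (Nat.pos_of_mul_pos_left (hn.trans_le h)).ne'
  calc log n ≤ log ((a : ℝ) ^ i * b ^ j) := log_le_log (by positivity) (by exact_mod_cast h)
    _ = i * log a + j * log b := by rw [log_mul ha hb, log_pow, log_pow]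

theorem exists_pos_nat_le_mul (c : ℝ) {η : ℝ} (hη : 0 < η) : ∃ n : ℕ, 0 < n ∧ c ≤ η * n := by
  obtain ⟨n, hn⟩ := exists_nat_gt (c / η)
  refine ⟨n + 1, n.succ_pos, ?_⟩
  rw [div_lt_iff₀ hη] at hn
  push_cast
  nlinarith

theorem exists_nat_le_and_exp_neg_mul_le {δ a : ℝ} (hδ0 : 0 < δ) (hδ1 : δ ≤ 1) (ha0 : 0 < a)
    (ha1 : a ≤ 1) : ∃ N : ℕ, (N : ℝ) ≤ (log δ⁻¹ + 1) / a ∧ exp (-(N * a)) ≤ δ := by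
  have hlog : 0 ≤ log δ⁻¹ := log_nonneg (one_le_inv₀ hδ0 |>.2 hδ1)
  refine ⟨⌈log δ⁻¹ / a⌉₊, ?_, ?_⟩
  · calc (⌈log δ⁻¹ / a⌉₊ : ℝ) ≤ log δ⁻¹ / a + 1 / a :=
          (Nat.ceil_lt_add_one (by positivity)).le.trans (by gcongr; exact one_le_one_div ha0 ha1)
      _ = (log δ⁻¹ + 1) / a := by ring
  · calc exp (-(⌈log δ⁻¹ / a⌉₊ * a)) ≤ exp (-log δ⁻¹) := by
          gcongr
          exact (div_le_iff₀ ha0).1 (Nat.le_ceil _)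
      _ = δ := by rw [log_inv, neg_neg, exp_log hδ0]

theorem sepCount_le_fintype_card {P α : Type*} [Fintype α] {Z : Set P} {sep : P → P → Prop}
    (f : P → α) (hf : ∀ x y, f x = f y → ¬ sep x y) : sepCount Z sep ≤ Fintype.card α := by
  classical
  refine csSup_le' ?_
  rintro _ ⟨W, -, hW, rfl⟩
  refine (card_le_card_of_injOn f (fun _ _ => mem_coe.2 (mem_univ _)) ?_).trans_eq card_univ
  exact fun x hx y hy hxy => by_contra fun hne => hf x y hxy (hW x hx y hy hne)

theorem limsupFolner_le {Γ : Type*} [Group Γ] [DecidableEq Γ] {ψ : Finset Γ → ℝ} {a : ℝ}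
    (ha : 0 ≤ a) {K : Finset Γ} (hK : K.Nonempty) {δ : ℝ} (hδ : 0 < δ)
    (h : ∀ F, memApproxInv K δ F → ψ F ≤ a) : limsupFolner ψ ≤ a := by
  unfold limsupFolner
  by_cases hbdd : BddBelow (Set.range fun p : {p : Finset Γ × ℝ // p.1.Nonempty ∧ 0 < p.2} =>
      ⨆ F : {F : Finset Γ // memApproxInv p.1.1 p.1.2 F}, ψ F.1)
  · exact (ciInf_le hbdd ⟨(K, δ), hK, hδ⟩).trans (Real.iSup_le (fun F => h F.1 F.2) ha)
  · rw [Real.iInf_of_not_bddBelow hbdd]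
    exact ha

section Covering

variable {Γ : Type*} [Group Γ] [DecidableEq Γ]

theorem card_le_card_filter_mem_mul_singleton {K F : Finset Γ} {t : Γ}
    (ht : ∀ k ∈ K, k⁻¹ * t ∈ F) : #K ≤ #(F.filter fun v => t ∈ K * {v}) := by
  refine card_le_card_of_injOn (fun k => k⁻¹ * t) (fun k hk => ?_) fun k _ k' _ hkk' => ?_
  · exact mem_filter.2 ⟨ht k hk, mem_mul.2 ⟨k, hk, _, mem_singleton_self _, mul_inv_cancel_left k t⟩⟩
  · simpa using hkk'

theorem exists_card_sdiff_mul_singleton_le (K U F : Finset Γ)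
    (hU : ∀ t ∈ U, ∀ k ∈ K, k⁻¹ * t ∈ F) :
    ∃ v : Γ, (#(U \ (K * {v})) : ℝ) ≤ (1 - #K / #F) * #U := by
  rcases F.eq_empty_or_nonempty with rfl | hF
  · exact ⟨1, by simpa using card_le_card (sdiff_subset (s := U))⟩
  -- double counting of the pairs `(t, v) ∈ U × F` with `t ∈ K v`
  have hcount : ∑ _v ∈ F, (#K * #U / #F : ℝ) ≤ ∑ v ∈ F, (#(U ∩ (K * {v})) : ℝ) := by
    have hF0 : (#F : ℝ) ≠ 0 := by exact_mod_cast hF.card_pos.ne'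
    have h : #U • #K ≤ ∑ t ∈ U, #(F.bipartiteAbove (fun t v => t ∈ K * {v}) t) :=
      card_nsmul_le_sum _ _ _ fun t ht => card_le_card_filter_mem_mul_singleton (hU t ht)
    rw [sum_card_bipartiteAbove_eq_sum_card_bipartiteBelow] at h
    simp only [bipartiteBelow, filter_mem_eq_inter, smul_eq_mul] at h
    rw [sum_const, nsmul_eq_mul, mul_div_cancel₀ _ hF0, mul_comm]
    exact_mod_cast h
  obtain ⟨v, -, hv⟩ := exists_le_of_sum_le hF hcount
  refine ⟨v, ?_⟩
  have hsplit : (#(U \ (K * {v})) : ℝ) + #(U ∩ (K * {v})) = #U := by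
    exact_mod_cast card_sdiff_add_card_inter U (K * {v})
  have : (#K * #U / #F : ℝ) = #K / #F * #U := by ring
  linarith

theorem exists_card_sdiff_mul_le_exp (K G F : Finset Γ) (hG : ∀ t ∈ G, ∀ k ∈ K, k⁻¹ * t ∈ F)
    (N : ℕ) : ∃ V : Finset Γ, #V ≤ N ∧ (#(G \ (K * V)) : ℝ) ≤ #G * exp (-(N * (#K / #F))) := by
  induction N with
  | zero => exact ⟨∅, by simp⟩
  | succ N ih =>
    obtain ⟨V, hVN, hV⟩ := ih
    obtain ⟨v, hv⟩ := exists_card_sdiff_mul_singleton_le K (G \ (K * V)) F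
      fun t ht => hG t (mem_sdiff.1 ht).1
    refine ⟨insert v V, (card_insert_le v V).trans (by omega), ?_⟩
    have hsplit : G \ (K * insert v V) = (G \ (K * V)) \ (K * {v}) := by
      rw [insert_eq, mul_union, sdiff_sdiff_left, sup_eq_union, union_comm]
    rw [hsplit]
    calc (#((G \ (K * V)) \ (K * {v})) : ℝ) ≤ (1 - #K / #F) * #(G \ (K * V)) := hv
      _ ≤ exp (-(#K / #F)) * (#G * exp (-(N * (#K / #F)))) := by
          gcongr
          linarith [add_one_le_exp (-(#K / #F : ℝ))]
      _ = #G * exp (-((N + 1 : ℕ) * (#K / #F))) := by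
          rw [mul_left_comm, ← exp_add]
          push_cast
          ring_nf

theorem exists_card_sdiff_mul_le_of_memApproxInv {K F : Finset Γ} (hK : K.Nonempty) {δ : ℝ}
    (hδ0 : 0 < δ) (hδ1 : δ < 1) (hF : memApproxInv K⁻¹ δ F) :
    ∃ V : Finset Γ, (#V : ℝ) ≤ (log δ⁻¹ + 1) * #F / #K ∧ (#(F \ (K * V)) : ℝ) ≤ 2 * δ * #F := by
  obtain ⟨hFne, hGlarge⟩ := hF
  set G := F.filter fun t => ∀ k ∈ K⁻¹, k * t ∈ F
  have hG : ∀ t ∈ G, ∀ k ∈ K, k⁻¹ * t ∈ F := fun t ht k hk =>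
    (mem_filter.1 ht).2 _ (mem_inv'.2 (by simpa using hk))
  have hFpos : (0 : ℝ) < #F := by exact_mod_cast hFne.card_pos
  have hKpos : (0 : ℝ) < #K := by exact_mod_cast hK.card_pos
  obtain ⟨t, ht⟩ : G.Nonempty := card_pos.1 (by exact_mod_cast (by nlinarith : (0 : ℝ) < #G))
  have hKF : (#K : ℝ) ≤ #F := by
    exact_mod_cast (card_le_card_filter_mem_mul_singleton (hG t ht)).trans (card_filter_le _ _)
  obtain ⟨N, hN, hexp⟩ := exists_nat_le_and_exp_neg_mul_le hδ0 hδ1.le (div_pos hKpos hFpos)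
    ((div_le_one hFpos).2 hKF)
  obtain ⟨V, hVN, hV⟩ := exists_card_sdiff_mul_le_exp K G F hG N
  refine ⟨V, ?_, ?_⟩
  · calc (#V : ℝ) ≤ N := by exact_mod_cast hVN
      _ ≤ (log δ⁻¹ + 1) / (#K / #F) := hN
      _ = (log δ⁻¹ + 1) * #F / #K := by rw [div_div_eq_mul_div]
  · have hsub : F \ (K * V) ⊆ (F \ G) ∪ (G \ (K * V)) := by
      intro s hs
      by_cases hsG : s ∈ G
      · exact mem_union_right _ (mem_sdiff.2 ⟨hsG, (mem_sdiff.1 hs).2⟩)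
      · exact mem_union_left _ (mem_sdiff.2 ⟨(mem_sdiff.1 hs).1, hsG⟩)
    have hFG : (#(F \ G) : ℝ) = #F - #G := by
      rw [card_sdiff_of_subset (filter_subset _ _), Nat.cast_sub (card_le_card (filter_subset _ _))]
    have hGF : (#G : ℝ) ≤ #F := by exact_mod_cast card_le_card (filter_subset _ _)
    calc (#(F \ (K * V)) : ℝ) ≤ #(F \ G) + #(G \ (K * V)) := by
          exact_mod_cast (card_le_card hsub).trans (card_union_le _ _)
      _ ≤ δ * #F + #F * δ := by
          gcongr
          · linarith
          · exact hV.trans (by gcongr)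
      _ = 2 * δ * #F := by ring

end Covering

theorem exists_net_log_card_le {X : Type*} [PseudoMetricSpace X] {q : ℕ} {C₁ C₂ : ℝ}
    (hC₂ : 1 ≤ C₂) (hcov : ∀ δ' : ℝ, 0 < δ' → δ' < 1 → ∃ Z : Finset X,
      (Z.card : ℝ) ≤ C₂ * (4 / δ') ^ q ∧ ∀ x : X, ∃ z ∈ Z, dist x z ≤ C₁ * δ')
    {r : ℝ} (hr0 : 0 < r) (hr : r < C₁) :
    ∃ Z : Finset X, log #Z ≤ log C₂ + q * log (4 * C₁ / r) ∧ ∀ x, ∃ z ∈ Z, dist x z ≤ r := by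
  have hC₁ : 0 < C₁ := hr0.trans hr
  obtain ⟨Z, hZcard, hZ⟩ := hcov (r / C₁) (by positivity) ((div_lt_one hC₁).2 hr)
  have hscale : 4 / (r / C₁) = 4 * C₁ / r := by field_simp
  have hlog : 0 ≤ log (4 * C₁ / r) := log_nonneg (by rw [le_div_iff₀ hr0]; linarith)
  refine ⟨Z, ?_, fun x => by simpa [mul_div_cancel₀ r hC₁.ne'] using hZ x⟩
  rw [hscale] at hZcard
  rcases Z.eq_empty_or_nonempty with rfl | hZne
  · simpa using add_nonneg (log_nonneg hC₂) (mul_nonneg q.cast_nonneg hlog)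
  calc log #Z ≤ log (C₂ * (4 * C₁ / r) ^ q) := log_le_log (by simpa using hZne) hZcard
    _ = log C₂ + q * log (4 * C₁ / r) := by
        rw [log_mul (by positivity) (by positivity), log_pow]

section Entropy

variable {Γ X : Type*} [Group Γ] [DecidableEq Γ] [PseudoMetricSpace X] [MulAction Γ X]

theorem sepCount_le_of_nets {F K V : Finset Γ} {M : ℝ≥0}
    (hKM : ∀ k ∈ K, LipschitzWith M (k • · : X → X)) {Z Z' : Finset X} {r r' ε : ℝ}
    (hZ : ∀ x, ∃ z ∈ Z, dist x z ≤ r) (hZ' : ∀ x, ∃ z ∈ Z', dist x z ≤ r')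
    (hr : 2 * M * r ≤ ε) (hr' : 2 * r' ≤ ε) :
    sepCount (Set.univ : Set X) (fun x y => ∃ s ∈ F, ε < dist (s • x) (s • y)) ≤
      #Z ^ #V * #Z' ^ #(F \ (K * V)) := by
  choose z hzZ hz using hZ
  choose z' hzZ' hz' using hZ'
  have close : ∀ {ρ : ℝ} {w : X → X}, (∀ x, dist x (w x) ≤ ρ) →
      ∀ {a b : X}, w a = w b → dist a b ≤ 2 * ρ := by
    intro ρ w hw a b hab
    linarith [dist_triangle_right a b (w a), hw a, hab ▸ hw b]
  let code : X → (V → Z) × ((F \ (K * V) : Finset Γ) → Z') := fun x =>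
    (fun v => ⟨z (v.1 • x), hzZ _⟩, fun s => ⟨z' (s.1 • x), hzZ' _⟩)
  refine (sepCount_le_fintype_card code ?_).trans_eq (by simp)
  rintro x y hxy ⟨s, hsF, hs⟩
  obtain ⟨hV, hR⟩ := Prod.mk.inj hxy
  by_cases hsKV : s ∈ K * V
  · obtain ⟨k, hk, v, hv, rfl⟩ := mem_mul.1 hsKV
    have hv := close hz (congrArg Subtype.val (congrFun hV ⟨v, hv⟩))
    have hk := (hKM k hk).dist_le_mul (v • x) (v • y)
    simp only [mul_smul] at hs
    nlinarith [M.coe_nonneg]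
  · linarith [close hz' (congrArg Subtype.val (congrFun hR ⟨s, mem_sdiff.2 ⟨hsF, hsKV⟩⟩))]

theorem log_sepCount_div_card_le_of_nets {K F : Finset Γ} (hK : K.Nonempty) {M : ℝ≥0}
    (hKM : ∀ k ∈ K, LipschitzWith M (k • · : X → X)) {δ : ℝ} (hδ0 : 0 < δ) (hδ1 : δ < 1)
    (hF : memApproxInv K⁻¹ δ F) {Z Z' : Finset X} {r r' ε : ℝ}
    (hZ : ∀ x, ∃ z ∈ Z, dist x z ≤ r) (hZ' : ∀ x, ∃ z ∈ Z', dist x z ≤ r')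
    (hr : 2 * M * r ≤ ε) (hr' : 2 * r' ≤ ε) :
    log (sepCount (Set.univ : Set X) (fun x y => ∃ s ∈ F, ε < dist (s • x) (s • y))) / #F ≤
      (log δ⁻¹ + 1) * log #Z / #K + 2 * δ * log #Z' := by
  obtain ⟨V, hV, hR⟩ := exists_card_sdiff_mul_le_of_memApproxInv hK hδ0 hδ1 hF
  have hFpos : (0 : ℝ) < #F := by exact_mod_cast hF.1.card_pos
  rw [div_le_iff₀ hFpos]
  calc _ ≤ #V * log #Z + #(F \ (K * V)) * log #Z' :=
        log_natCast_le_of_le_pow_mul_pow (sepCount_le_of_nets hKM hZ hZ' hr hr')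
    _ ≤ (log δ⁻¹ + 1) * #F / #K * log #Z + 2 * δ * #F * log #Z' := by gcongr
    _ = ((log δ⁻¹ + 1) * log #Z / #K + 2 * δ * log #Z') * #F := by field_simp

theorem log_sepCount_div_card_le {K F : Finset Γ} (hK : K.Nonempty) {M : ℝ≥0} (hM : 1 ≤ M)
    (hKM : ∀ k ∈ K, LipschitzWith M (k • · : X → X)) {δ : ℝ} (hδ0 : 0 < δ) (hδ1 : δ < 1)
    (hF : memApproxInv K⁻¹ δ F) {q : ℕ} {C₁ C₂ : ℝ} (hC₁ : 1 ≤ C₁) (hC₂ : 1 ≤ C₂)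
    (hcov : ∀ δ' : ℝ, 0 < δ' → δ' < 1 → ∃ Z : Finset X,
      (Z.card : ℝ) ≤ C₂ * (4 / δ') ^ q ∧ ∀ x : X, ∃ z ∈ Z, dist x z ≤ C₁ * δ')
    {ε : ℝ} (hε : 0 < ε) :
    log (sepCount (Set.univ : Set X) (fun x y => ∃ s ∈ F, ε < dist (s • x) (s • y))) / #F ≤
      (log δ⁻¹ + 1) * (log C₂ + q * log (8 * C₁ / min ε 1) + q * log M) / #K +
        2 * δ * (log C₂ + q * log (8 * C₁ / min ε 1)) := by
  set ε' := min ε 1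
  have hε' : 0 < ε' := lt_min hε one_pos
  have hM0 : (0 : ℝ) < M := zero_lt_one.trans_le hM
  have hr : ε' / (2 * M) < C₁ :=
    calc ε' / (2 * M) ≤ ε' / 2 := by gcongr; linarith
      _ < C₁ := by linarith [min_le_right ε 1]
  obtain ⟨Z, hZlog, hZ⟩ := exists_net_log_card_le (X := X) hC₂ hcov (by positivity) hr
  obtain ⟨Z', hZ'log, hZ'⟩ := exists_net_log_card_le (X := X) hC₂ hcov (r := ε' / 2)
    (by positivity) (by linarith [min_le_right ε 1])
  have hfine : log (4 * C₁ / (ε' / (2 * M))) = log (8 * C₁ / ε') + log M := by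
    rw [← log_mul (by positivity) hM0.ne']
    congr 1
    field_simp
    ring
  have hcoarse : 4 * C₁ / (ε' / 2) = 8 * C₁ / ε' := by field_simp; ring
  have hL : 0 ≤ log δ⁻¹ + 1 := by linarith [log_nonneg (one_le_inv₀ hδ0 |>.2 hδ1.le)]
  calc _ ≤ (log δ⁻¹ + 1) * log #Z / #K + 2 * δ * log #Z' :=
        log_sepCount_div_card_le_of_nets hK hKM hδ0 hδ1 hF hZ hZ'
          (by field_simp; exact min_le_left ε 1) (by linarith [min_le_left ε 1])
    _ ≤ _ := by
        rw [hfine] at hZlog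
        rw [hcoarse] at hZ'log
        gcongr
        linarith

end Entropy

section Blocks

variable {Γ : Type*} [Group Γ] [DecidableEq Γ]

theorem exists_card_mul_image_pow_eq {s : Γ} (hs : ¬IsOfFinOrder s)
    (hindex : (Subgroup.zpowers s).index = 0) (m : ℕ) :
    ∃ C : Finset Γ, #C = m ∧ ∀ n : ℕ, #(C * (range n).image (s ^ ·)) = m * n := by
  have := Subgroup.index_eq_zero_iff_infinite.1 hindex
  obtain ⟨T, hT⟩ := Infinite.exists_subset_card_eq (Γ ⧸ Subgroup.zpowers s) m
  have hpow := injective_pow_iff_not_isOfFinOrder.2 hs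
  refine ⟨T.image Quotient.out, by rw [card_image_of_injective _ Quotient.out_injective, hT],
    fun n => ?_⟩
  rw [card_mul_iff.2, card_image_of_injective _ Quotient.out_injective,
    card_image_of_injective _ hpow, hT, card_range]
  -- representatives of distinct cosets of `⟨s⟩` differ by no power of `s`
  rintro ⟨_, _⟩ ⟨ha, hi⟩ ⟨_, _⟩ ⟨hb, hj⟩ h
  obtain ⟨a, -, rfl⟩ := mem_image.1 ha
  obtain ⟨i, -, rfl⟩ := mem_image.1 hi
  obtain ⟨b, -, rfl⟩ := mem_image.1 hb
  obtain ⟨j, -, rfl⟩ := mem_image.1 hj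
  have hab : a = b := by
    simpa [QuotientGroup.mk_mul_of_mem _ (pow_mem (Subgroup.mem_zpowers s) _)] using
      congrArg (QuotientGroup.mk (s := Subgroup.zpowers s)) h
  subst hab
  simp only [mul_right_inj] at h
  rw [hpow h]

variable {X : Type*} [PseudoMetricSpace X] [MulAction Γ X]

theorem lipschitzWith_smul_of_mem_mul_image_pow {Lip : Γ → ℝ≥0}
    (hLip : ∀ g, LipschitzWith (Lip g) (g • · : X → X)) {s : Γ} (hs : 1 ≤ Lip s)
    {C : Finset Γ} {n : ℕ} {k : Γ} (hk : k ∈ C * (range n).image (s ^ ·)) :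
    LipschitzWith (C.sup Lip * Lip s ^ n) (k • · : X → X) := by
  obtain ⟨c, hc, _, hp, rfl⟩ := mem_mul.1 hk
  obtain ⟨i, hi, rfl⟩ := mem_image.1 hp
  have hcomp : (fun x : X => (c * s ^ i) • x) = (c • ·) ∘ (s • ·)^[i] := by
    funext x
    simp [smul_iterate, mul_smul]
  rw [hcomp]
  exact ((hLip c).comp ((hLip s).iterate i)).weaken
    (mul_le_mul' (le_sup hc) (pow_le_pow_right₀ hs (mem_range.1 hi).le))

theorem exists_finset_log_lipschitz_le {Lip : Γ → ℝ≥0} (hLip1 : ∀ g, 1 ≤ Lip g)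
    (hLip : ∀ g, LipschitzWith (Lip g) (g • · : X → X)) {s : Γ} (hs : ¬IsOfFinOrder s)
    (hindex : (Subgroup.zpowers s).index = 0) (a b : ℝ) {η : ℝ} (hη : 0 < η) :
    ∃ K : Finset Γ, K.Nonempty ∧ ∃ M : ℝ≥0, 1 ≤ M ∧
      (∀ k ∈ K, LipschitzWith M (k • · : X → X)) ∧ a + b * log M ≤ η * #K := by
  obtain ⟨m, hm, hbm⟩ := exists_pos_nat_le_mul (b * log (Lip s)) (half_pos hη)
  obtain ⟨C, hCm, hC⟩ := exists_card_mul_image_pow_eq hs hindex m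
  obtain ⟨c, hc⟩ : C.Nonempty := card_pos.1 (hCm ▸ hm)
  have hsup : 1 ≤ C.sup Lip := (hLip1 c).trans (le_sup hc)
  obtain ⟨n, hn, han⟩ := exists_pos_nat_le_mul (a + b * log ((C.sup Lip : ℝ≥0) : ℝ)) (half_pos hη)
  refine ⟨C * (range n).image (s ^ ·), card_pos.1 (by rw [hC]; positivity), C.sup Lip * Lip s ^ n,
    one_le_mul hsup (one_le_pow₀ (hLip1 s)),
    fun k hk => lipschitzWith_smul_of_mem_mul_image_pow hLip (hLip1 s) hk, ?_⟩
  have hsup0 : (0 : ℝ) < C.sup Lip := zero_lt_one.trans_le hsup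
  have hs0 : (0 : ℝ) < Lip s := zero_lt_one.trans_le (hLip1 s)
  have hm1 : (1 : ℝ) ≤ m := by exact_mod_cast hm
  rw [hC, NNReal.coe_mul, NNReal.coe_pow, log_mul hsup0.ne' (by positivity), log_pow]
  have hpowers : n * (b * log (Lip s)) ≤ n * (η / 2 * m) := by gcongr
  have hcosets : η / 2 * n ≤ η / 2 * n * m := le_mul_of_one_le_right (by positivity) hm1
  push_cast
  linarith

end Blocks

theorem limsup_sepCount_le_zero_of_smooth_like_action_general
    {Γ : Type*} [Group Γ] [DecidableEq Γ]
    {X : Type*} [MetricSpace X] [MulAction Γ X]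
    (hLip : ∀ s : Γ, ∃ Ks : ℝ, 1 ≤ Ks ∧ ∀ x y : X, dist (s • x) (s • y) ≤ Ks * dist x y)
    (s₀ : Γ) (hord : ¬ IsOfFinOrder s₀) (hindex : (Subgroup.zpowers s₀).index = 0)
    (q : ℕ) (C₁ C₂ : ℝ) (hC₁ : 1 ≤ C₁) (hC₂ : 1 ≤ C₂)
    (hcov : ∀ δ' : ℝ, 0 < δ' → δ' < 1 → ∃ Z : Finset X,
      (Z.card : ℝ) ≤ C₂ * (4 / δ') ^ q ∧ ∀ x : X, ∃ z ∈ Z, dist x z ≤ C₁ * δ')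
    (ε : ℝ) (hε : 0 < ε) :
    limsupFolner (fun F : Finset Γ =>
      Real.log (sepCount (Set.univ : Set X)
          (fun x y => ∃ s ∈ F, ε < dist (s • x) (s • y))) / (F.card : ℝ)) ≤ 0 := by
  choose Lip hLip1 hLipW using fun g : Γ =>
    let ⟨Ks, hKs1, hKs⟩ := hLip g
    (⟨⟨Ks, by linarith⟩, hKs1, .of_dist_le_mul hKs⟩ :
      ∃ M : ℝ≥0, 1 ≤ M ∧ LipschitzWith M (g • · : X → X))
  refine le_of_forall_pos_le_add fun η hη => ?_
  set A := log C₂ + q * log (8 * C₁ / min ε 1)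
  obtain ⟨N, hN, hAN⟩ := exists_pos_nat_le_mul (4 * A) hη
  set δ : ℝ := (N + 1 : ℝ)⁻¹
  have hδ0 : 0 < δ := by positivity
  have hδ1 : δ < 1 := inv_lt_one_of_one_lt₀ (by norm_cast; omega)
  set L := log δ⁻¹ + 1
  obtain ⟨K, hK, M, hM, hKM, hKsmall⟩ :=
    exists_finset_log_lipschitz_le hLip1 hLipW hord hindex (L * A) (L * q) (half_pos hη)
  refine limsupFolner_le (by positivity) hK.inv hδ0 fun F hF => ?_
  have hKpos : (0 : ℝ) < #K := by exact_mod_cast hK.card_pos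
  calc _ ≤ L * (A + q * log M) / #K + 2 * δ * A :=
        log_sepCount_div_card_le hK hM hKM hδ0 hδ1 hF hC₁ hC₂ hcov hε
    _ ≤ η / 2 + η / 2 := by
        refine add_le_add ((div_le_iff₀ hKpos).2 (by linarith)) ?_
        simp only [δ]
        field_simp
        linarith
    _ = 0 + η := by ring

/-- **Lemma 5.9 (vanishing entropy for Lipschitz actions on doubling spaces).**
Let `Γ` be a countable discrete amenable group containing an element `s₀` of infinite order
whose cyclic subgroup has infinite index.  Let `Γ` act on a compact metric space `X` by
Lipschitz homeomorphisms, and assume `X` satisfies a polynomial covering bound: there are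
`q ∈ ℕ` and `C₁, C₂ ≥ 1` such that for every `δ' ∈ (0,1)` there is a `C₁δ'`-dense subset of
`X` of cardinality at most `C₂ (4/δ')^q`.  Then for every `ε > 0`,
`limsup_F log N_ε(X, θ_{F,∞})/|F| ≤ 0`. -/
theorem limsup_sepCount_le_zero_of_smooth_like_action
    {Γ : Type*} [Group Γ] [Countable Γ] [DecidableEq Γ]
    (hamen : ∀ K : Finset Γ, K.Nonempty → ∀ δ : ℝ, 0 < δ → ∃ F : Finset Γ, memApproxInv K δ F)
    {X : Type*} [MetricSpace X] [CompactSpace X] [MulAction Γ X]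
    (hLip : ∀ s : Γ, ∃ Ks : ℝ, 1 ≤ Ks ∧ ∀ x y : X, dist (s • x) (s • y) ≤ Ks * dist x y)
    (s₀ : Γ) (hord : ¬ IsOfFinOrder s₀) (hindex : (Subgroup.zpowers s₀).index = 0)
    (q : ℕ) (C₁ C₂ : ℝ) (hC₁ : 1 ≤ C₁) (hC₂ : 1 ≤ C₂)
    (hcov : ∀ δ' : ℝ, 0 < δ' → δ' < 1 → ∃ Z : Finset X,
      (Z.card : ℝ) ≤ C₂ * (4 / δ') ^ q ∧ ∀ x : X, ∃ z ∈ Z, dist x z ≤ C₁ * δ')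
    (ε : ℝ) (hε : 0 < ε) :
    limsupFolner (fun F : Finset Γ =>
      Real.log (sepCount (Set.univ : Set X)
          (fun x y => ∃ s ∈ F, ε < dist (s • x) (s • y))) / (F.card : ℝ)) ≤ 0 :=
  limsup_sepCount_le_zero_of_smooth_like_action_general hLip s₀ hord hindex q C₁ C₂ hC₁ hC₂ hcov ε
    hε
end
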